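/- arXiv:1903.02675 — 8 statements merged into one kernel-verified Lean document; each statement's English description precedes it below -/
import Mathlib

section
/- Let Y be a real symmetric n×n matrix with eigenvalues λ_1, …, λ_n, and let u be uniformly distributed on the unit sphere S^{n-1} ⊂ ℝⁿ. Then p̄(Y) := E_u[log(uᵀ e^{Y} u)] = E_u[log(Σ_{i=1}^n u_i² e^{λ_i})], and moreover the function Y ↦ p̄(Y), defined on the real vector space of symmetric n×n matrices, is convex. -/
open MeasureTheory Matrix

noncomputable section

open scoped Classical in
/-- Eigenvalues of a real symmetric (Hermitian) matrix; junk value `0` otherwise. -/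
noncomputable def eigs {n : ℕ} (Y : Matrix (Fin n) (Fin n) ℝ) : Fin n → ℝ :=
  if h : Y.IsHermitian then h.eigenvalues else 0

/-- Largest eigenvalue of a real symmetric matrix. -/
noncomputable def lambdaMax {n : ℕ} (Y : Matrix (Fin n) (Fin n) ℝ) : ℝ :=
  ⨆ i, eigs Y i

/-- Operator norm of a real symmetric matrix: largest absolute value of an eigenvalue. -/
noncomputable def opNorm {n : ℕ} (Y : Matrix (Fin n) (Fin n) ℝ) : ℝ :=
  ⨆ i, |eigs Y i|

/-- Frobenius inner product `⟨A, B⟩ = tr (Aᵀ B)`. -/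
noncomputable def minner {n : ℕ} (A B : Matrix (Fin n) (Fin n) ℝ) : ℝ :=
  (Aᵀ * B).trace

/-- Matrix exponential. -/
noncomputable def mexp {n : ℕ} (Y : Matrix (Fin n) (Fin n) ℝ) : Matrix (Fin n) (Fin n) ℝ :=
  NormedSpace.exp Y

/-- The uniform (normalized surface) probability measure on the unit sphere in `ℝⁿ`. -/
noncomputable def sphereUniform (n : ℕ) :
    Measure (Metric.sphere (0 : EuclideanSpace ℝ (Fin n)) 1) :=
  ((volume : Measure (EuclideanSpace ℝ (Fin n))).toSphere Set.univ)⁻¹ •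
    (volume : Measure (EuclideanSpace ℝ (Fin n))).toSphere

/-- The randomized mirror projection `P_u(Y) = e^{Y/2} u uᵀ e^{Y/2} / (uᵀ e^Y u)`. -/
noncomputable def Pu {n : ℕ} (u : Fin n → ℝ) (Y : Matrix (Fin n) (Fin n) ℝ) :
    Matrix (Fin n) (Fin n) ℝ :=
  (u ⬝ᵥ (mexp Y *ᵥ u))⁻¹ •
    (mexp ((2 : ℝ)⁻¹ • Y) * Matrix.vecMulVec u u * mexp ((2 : ℝ)⁻¹ • Y))

/-- The average mirror projection `P̄(Y) = E_u P_u(Y)`, `u` uniform on the unit sphere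
(defined entrywise via the Bochner integral). -/
noncomputable def Pbar {n : ℕ} (Y : Matrix (Fin n) (Fin n) ℝ) : Matrix (Fin n) (Fin n) ℝ :=
  Matrix.of fun i j =>
    ∫ u, Pu (fun k => (u : EuclideanSpace ℝ (Fin n)) k) Y i j ∂(sphereUniform n)

/-- `p̄(Y) = E_u log (uᵀ e^Y u)`, `u` uniform on the unit sphere. -/
noncomputable def pbar {n : ℕ} (Y : Matrix (Fin n) (Fin n) ℝ) : ℝ :=
  ∫ u, Real.log ((fun k => (u : EuclideanSpace ℝ (Fin n)) k) ⬝ᵥ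
      (mexp Y *ᵥ fun k => (u : EuclideanSpace ℝ (Fin n)) k)) ∂(sphereUniform n)

/-- Bregman divergence induced by `p̄`. -/
noncomputable def Vbar {n : ℕ} (Y Y' : Matrix (Fin n) (Fin n) ℝ) : ℝ :=
  pbar Y' - pbar Y - minner (Y' - Y) (Pbar Y)

/-- Matrix multiplicative weights projection `P^mw(Y) = e^Y / tr e^Y`. -/
noncomputable def Pmw {n : ℕ} (Y : Matrix (Fin n) (Fin n) ℝ) : Matrix (Fin n) (Fin n) ℝ :=
  ((mexp Y).trace)⁻¹ • mexp Y

/-- Euclidean norm on `ℝⁿ`. -/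
noncomputable def enorm2 {n : ℕ} (v : Fin n → ℝ) : ℝ :=
  Real.sqrt (∑ i, v i ^ 2)

/-- Trace (nuclear) norm of a real symmetric matrix: sum of absolute values of eigenvalues. -/
noncomputable def traceNorm {n : ℕ} (M : Matrix (Fin n) (Fin n) ℝ) : ℝ :=
  ∑ i, |eigs M i|

/-!
Diagonalising `Y = U diag(λ) Uᵀ`, the substitution `u ↦ Uᵀ u`, which preserves the uniform
measure on the sphere, turns `uᵀ e^Y u` into `∑ uᵢ² e^{λᵢ}`; hence `p̄ = J ∘ λ` with
`J x = E_u log ∑ uᵢ² e^{xᵢ}`. Each `x ↦ log ∑ uᵢ² e^{xᵢ}` is convex, so `J` is convex, and `J` is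
invariant under permutations of the coordinates. Such a spectral function is convex on symmetric
matrices (Davis): if `w` is an eigenbasis of `C = sA + tB`, then `λ(C) = s d_A + t d_B` with
`d_A = (wᵢᵀ A wᵢ)ᵢ = S λ(A)` for the doubly stochastic matrix `Sᵢⱼ = ⟪vⱼ, wᵢ⟫²` (`v` an
eigenbasis of `A`), and `J (S λ(A)) ≤ J (λ(A))` by Birkhoff's theorem and Jensen's inequality.
-/

open scoped Pointwise RealInnerProductSpace

namespace LinearIsometryEquiv

variable {E : Type*} [NormedAddCommGroup E] [NormedSpace ℝ E]

def sphereHomeomorph (e : E ≃ₗᵢ[ℝ] E) : Metric.sphere (0 : E) 1 ≃ₜ Metric.sphere (0 : E) 1 :=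
  e.toHomeomorph.subtype fun x => by simp

theorem preimage_smul_set (e : E ≃ₗᵢ[ℝ] E) (S : Set ℝ) (T : Set E) :
    e ⁻¹' (S • T) = S • e ⁻¹' T := by
  have h := e.symm.image_eq_preimage_symm
  simp only [symm_symm] at h
  rw [← h, ← h]
  simp only [← Set.image2_smul, Set.image_image2, Set.image2_image_right, map_smul]

theorem image_val_preimage_sphereHomeomorph (e : E ≃ₗᵢ[ℝ] E)
    (s : Set (Metric.sphere (0 : E) 1)) :
    Subtype.val '' (e.sphereHomeomorph ⁻¹' s) = e ⁻¹' (Subtype.val '' s) := by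
  ext x
  constructor
  · rintro ⟨y, hy, rfl⟩
    exact ⟨_, hy, rfl⟩
  · rintro ⟨y, hy, hxy⟩
    have hx : x ∈ Metric.sphere (0 : E) 1 := by
      have hy1 := y.2
      rwa [hxy, mem_sphere_zero_iff_norm, e.norm_map, ← mem_sphere_zero_iff_norm] at hy1
    have hxy' : e.sphereHomeomorph ⟨x, hx⟩ = y := Subtype.ext hxy.symm
    exact ⟨⟨x, hx⟩, by rwa [Set.mem_preimage, hxy'], rfl⟩

theorem toSphere_map_sphereHomeomorph [MeasurableSpace E] [BorelSpace E] {μ : Measure E}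
    (e : E ≃ₗᵢ[ℝ] E) (he : MeasurePreserving e μ μ) :
    μ.toSphere.map e.sphereHomeomorph = μ.toSphere := by
  ext s hs
  have hm := e.sphereHomeomorph.measurable
  rw [Measure.map_apply hm hs, Measure.toSphere_apply' _ (hm hs), Measure.toSphere_apply' _ hs,
    image_val_preimage_sphereHomeomorph, ← preimage_smul_set,
    he.measure_preimage_emb e.toHomeomorph.measurableEmbedding]

end LinearIsometryEquiv

instance isFiniteMeasure_sphereUniform (n : ℕ) : IsFiniteMeasure (sphereUniform n) := by
  refine ⟨?_⟩
  rw [sphereUniform, Measure.smul_apply, smul_eq_mul]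
  rcases eq_or_ne ((volume : Measure (EuclideanSpace ℝ (Fin n))).toSphere Set.univ) 0 with h | h
  · simp [h]
  · rw [ENNReal.inv_mul_cancel h (measure_ne_top _ _)]
    exact ENNReal.one_lt_top

theorem measurePreserving_sphereHomeomorph {n : ℕ}
    (e : EuclideanSpace ℝ (Fin n) ≃ₗᵢ[ℝ] EuclideanSpace ℝ (Fin n)) :
    MeasurePreserving e.sphereHomeomorph (sphereUniform n) (sphereUniform n) :=
  ⟨e.sphereHomeomorph.measurable, by
    rw [sphereUniform, Measure.map_smul, e.toSphere_map_sphereHomeomorph e.measurePreserving]⟩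

namespace Matrix.IsHermitian

variable {n : Type*} [Fintype n] [DecidableEq n] {A : Matrix n n ℝ}

theorem eigenvectorUnitary_transpose_mulVec (hA : A.IsHermitian) (x : EuclideanSpace ℝ n) :
    (hA.eigenvectorUnitary : Matrix n n ℝ)ᵀ *ᵥ x = hA.eigenvectorBasis.repr x := by
  ext j
  simp [OrthonormalBasis.repr_apply_apply, mulVec, dotProduct,
    EuclideanSpace.inner_eq_star_dotProduct, mul_comm]

theorem dotProduct_conj_diagonal_mulVec (hA : A.IsHermitian) (d : n → ℝ)
    (x : EuclideanSpace ℝ n) :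
    x ⬝ᵥ (((hA.eigenvectorUnitary : Matrix n n ℝ) * diagonal d *
        star (hA.eigenvectorUnitary : Matrix n n ℝ)) *ᵥ x)
      = ∑ j, (hA.eigenvectorBasis.repr x j) ^ 2 * d j := by
  rw [← mulVec_mulVec, ← mulVec_mulVec, dotProduct_mulVec, ← mulVec_transpose,
    star_eq_conjTranspose, conjTranspose_eq_transpose_of_trivial,
    eigenvectorUnitary_transpose_mulVec]
  simp only [dotProduct, mulVec_diagonal]
  exact Finset.sum_congr rfl fun j _ => by ring

theorem dotProduct_mulVec_eq_sum (hA : A.IsHermitian) (x : EuclideanSpace ℝ n) :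
    x ⬝ᵥ (A *ᵥ x) = ∑ j, (hA.eigenvectorBasis.repr x j) ^ 2 * hA.eigenvalues j := by
  conv_lhs => rw [hA.spectral_theorem]
  rw [Unitary.conjStarAlgAut_apply]
  simpa using hA.dotProduct_conj_diagonal_mulVec hA.eigenvalues x

theorem exp_eq_conj_diagonal (hA : A.IsHermitian) :
    NormedSpace.exp A = (hA.eigenvectorUnitary : Matrix n n ℝ) *
      diagonal (Real.exp ∘ hA.eigenvalues) * star (hA.eigenvectorUnitary : Matrix n n ℝ) := by
  have hU : star (hA.eigenvectorUnitary : Matrix n n ℝ) =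
      (hA.eigenvectorUnitary : Matrix n n ℝ)⁻¹ :=
    (inv_eq_left_inv (Unitary.coe_star_mul_self hA.eigenvectorUnitary)).symm
  conv_lhs => rw [hA.spectral_theorem, Unitary.conjStarAlgAut_apply, hU]
  rw [hU, exp_conj _ _ Unitary.isUnit_coe, exp_diagonal, Pi.exp_def, Real.exp_eq_exp_ℝ]
  rfl

theorem dotProduct_exp_mulVec_eq_sum (hA : A.IsHermitian) (x : EuclideanSpace ℝ n) :
    x ⬝ᵥ (NormedSpace.exp A *ᵥ x)
      = ∑ j, (hA.eigenvectorBasis.repr x j) ^ 2 * Real.exp (hA.eigenvalues j) := by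
  rw [hA.exp_eq_conj_diagonal, dotProduct_conj_diagonal_mulVec]
  rfl

theorem eigenvalues_eq_dotProduct (hA : A.IsHermitian) (i : n) :
    hA.eigenvalues i = hA.eigenvectorBasis i ⬝ᵥ (A *ᵥ hA.eigenvectorBasis i) := by
  simpa using hA.eigenvalues_eq i

theorem dotProduct_mulVec_orthonormalBasis (hA : A.IsHermitian)
    (w : OrthonormalBasis n ℝ (EuclideanSpace ℝ n)) :
    (fun i => w i ⬝ᵥ (A *ᵥ w i))
      = of (fun i j => ⟪hA.eigenvectorBasis j, w i⟫ ^ 2) *ᵥ hA.eigenvalues := by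
  ext i
  rw [hA.dotProduct_mulVec_eq_sum]
  simp [mulVec, dotProduct, OrthonormalBasis.repr_apply_apply]

end Matrix.IsHermitian

theorem OrthonormalBasis.inner_sq_mem_doublyStochastic {ι E : Type*} [Fintype ι]
    [DecidableEq ι] [NormedAddCommGroup E] [InnerProductSpace ℝ E]
    (b w : OrthonormalBasis ι ℝ E) :
    of (fun i j => ⟪b j, w i⟫ ^ 2) ∈ doublyStochastic ℝ ι := by
  refine mem_doublyStochastic_iff_sum.mpr ⟨fun i j => sq_nonneg _, fun i => ?_, fun j => ?_⟩
  · simp [b.sum_sq_inner_right, w.orthonormal.1 i]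
  · simp [w.sum_sq_inner_left, b.orthonormal.1 j]

theorem ConvexOn.map_mulVec_le_of_mem_doublyStochastic {ι : Type*} [Fintype ι] [DecidableEq ι]
    {F : (ι → ℝ) → ℝ} (hF : ConvexOn ℝ Set.univ F)
    (hperm : ∀ (σ : Equiv.Perm ι) x, F (x ∘ σ) = F x)
    {S : Matrix ι ι ℝ} (hS : S ∈ doublyStochastic ℝ ι) (x : ι → ℝ) : F (S *ᵥ x) ≤ F x := by
  obtain ⟨c, hc0, hc1, rfl⟩ := exists_eq_sum_perm_of_mem_doublyStochastic hS
  calc F ((∑ σ, c σ • σ.permMatrix ℝ) *ᵥ x) = F (∑ σ, c σ • (x ∘ σ)) := by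
        simp [sum_mulVec, smul_mulVec, permMatrix_mulVec]
    _ ≤ ∑ σ, c σ • F (x ∘ σ) := hF.map_sum_le (fun σ _ => hc0 σ) hc1 (fun _ _ => trivial)
    _ = F x := by simp only [hperm, ← Finset.sum_smul, hc1, one_smul]

theorem eigs_of_isSymm {n : ℕ} {A : Matrix (Fin n) (Fin n) ℝ} (hA : A.IsSymm) :
    eigs A = (isHermitian_iff_isSymm.mpr hA).eigenvalues :=
  dif_pos _

theorem convex_setOf_isSymm {n : Type*} : Convex ℝ {A : Matrix n n ℝ | A.IsSymm} :=
  fun _ hA _ hB s t _ _ _ => (hA.smul s).add (hB.smul t)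

theorem ConvexOn.comp_eigs {n : ℕ} {F : (Fin n → ℝ) → ℝ} (hF : ConvexOn ℝ Set.univ F)
    (hperm : ∀ (σ : Equiv.Perm (Fin n)) x, F (x ∘ σ) = F x) :
    ConvexOn ℝ {A : Matrix (Fin n) (Fin n) ℝ | A.IsSymm} (fun A => F (eigs A)) := by
  refine ⟨convex_setOf_isSymm, fun A hA B hB s t hs ht hst => ?_⟩
  have hA' := isHermitian_iff_isSymm.mpr hA
  have hB' := isHermitian_iff_isSymm.mpr hB
  have hC := convex_setOf_isSymm hA hB hs ht hst
  set w := (isHermitian_iff_isSymm.mpr hC).eigenvectorBasis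
  have hdiag : eigs (s • A + t • B)
      = s • (fun i => w i ⬝ᵥ (A *ᵥ w i)) + t • (fun i => w i ⬝ᵥ (B *ᵥ w i)) := by
    ext i
    simp [eigs_of_isSymm hC, IsHermitian.eigenvalues_eq_dotProduct, w, add_mulVec, smul_mulVec]
  have hSA := hF.map_mulVec_le_of_mem_doublyStochastic hperm
    (hA'.eigenvectorBasis.inner_sq_mem_doublyStochastic w) hA'.eigenvalues
  have hSB := hF.map_mulVec_le_of_mem_doublyStochastic hperm
    (hB'.eigenvectorBasis.inner_sq_mem_doublyStochastic w) hB'.eigenvalues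
  dsimp only
  rw [hdiag, hA'.dotProduct_mulVec_orthonormalBasis w, hB'.dotProduct_mulVec_orthonormalBasis w,
    eigs_of_isSymm hA, eigs_of_isSymm hB]
  exact (hF.2 trivial trivial hs ht hst).trans
    (add_le_add (smul_le_smul_of_nonneg_left hSA hs) (smul_le_smul_of_nonneg_left hSB ht))

theorem sum_mul_exp_sub_log_eq_one {ι : Type*} [Fintype ι] (a x : ι → ℝ)
    (hpos : 0 < ∑ i, a i * Real.exp (x i)) :
    ∑ i, a i * Real.exp (x i - Real.log (∑ j, a j * Real.exp (x j))) = 1 := by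
  simp_rw [Real.exp_sub, Real.exp_log hpos, mul_div_assoc', ← Finset.sum_div, div_self hpos.ne']

theorem convexOn_log_sum_mul_exp {ι : Type*} [Fintype ι] {a : ι → ℝ} (ha : ∀ i, 0 ≤ a i)
    (hpos : ∃ i, 0 < a i) :
    ConvexOn ℝ Set.univ (fun x : ι → ℝ => Real.log (∑ i, a i * Real.exp (x i))) := by
  have hZ : ∀ x : ι → ℝ, 0 < ∑ i, a i * Real.exp (x i) := fun x =>
    let ⟨j, hj⟩ := hpos
    Finset.sum_pos' (fun i _ => mul_nonneg (ha i) (Real.exp_pos _).le)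
      ⟨j, Finset.mem_univ j, mul_pos hj (Real.exp_pos _)⟩
  refine ⟨convex_univ, fun x _ y _ s t hs ht hst => ?_⟩
  let LX := Real.log (∑ i, a i * Real.exp (x i))
  let LY := Real.log (∑ i, a i * Real.exp (y i))
  -- after normalising both sums to `1`, this is the convexity of `exp`, term by term
  have key : ∑ i, a i * Real.exp ((s • x + t • y) i) ≤ Real.exp (s * LX + t * LY) := calc
    ∑ i, a i * Real.exp ((s • x + t • y) i)
        = Real.exp (s * LX + t * LY) *
            ∑ i, a i * Real.exp (s * (x i - LX) + t * (y i - LY)) := by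
      rw [Finset.mul_sum]
      refine Finset.sum_congr rfl fun i _ => ?_
      rw [mul_left_comm, ← Real.exp_add]
      simp only [Pi.add_apply, Pi.smul_apply, smul_eq_mul]
      ring_nf
    _ ≤ Real.exp (s * LX + t * LY) *
            ∑ i, a i * (s * Real.exp (x i - LX) + t * Real.exp (y i - LY)) := by
      refine mul_le_mul_of_nonneg_left (Finset.sum_le_sum fun i _ => ?_) (Real.exp_pos _).le
      exact mul_le_mul_of_nonneg_left (convexOn_exp.2 trivial trivial hs ht hst) (ha i)
    _ = Real.exp (s * LX + t * LY) := by
      simp only [mul_add, Finset.sum_add_distrib, mul_left_comm (a _), ← Finset.mul_sum, LX, LY,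
        sum_mul_exp_sub_log_eq_one a x (hZ x), sum_mul_exp_sub_log_eq_one a y (hZ y), mul_one,
        hst]
  exact (Real.log_le_log (hZ _) key).trans_eq (Real.log_exp _)

theorem convexOn_integral {X E : Type*} [MeasurableSpace X] {μ : Measure X} [AddCommMonoid E]
    [Module ℝ E] {s : Set E} (hs : Convex ℝ s) {f : X → E → ℝ} (hf : ∀ u, ConvexOn ℝ s (f u))
    (hint : ∀ x ∈ s, Integrable (fun u => f u x) μ) :
    ConvexOn ℝ s (fun x => ∫ u, f u x ∂μ) := by
  refine ⟨hs, fun x hx y hy a b ha hb hab => ?_⟩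
  have hax : Integrable (fun u => a • f u x) μ := (hint x hx).smul a
  have hby : Integrable (fun u => b • f u y) μ := (hint y hy).smul b
  calc ∫ u, f u (a • x + b • y) ∂μ ≤ ∫ u, a • f u x + b • f u y ∂μ :=
        integral_mono (hint _ (hs hx hy ha hb hab)) (hax.add hby)
          fun u => (hf u).2 hx hy ha hb hab
    _ = a • ∫ u, f u x ∂μ + b • ∫ u, f u y ∂μ := by
        rw [integral_add hax hby, integral_smul, integral_smul]

def pbarSpectral (n : ℕ) (x : Fin n → ℝ) : ℝ :=
  ∫ u, Real.log (∑ i, ((u : EuclideanSpace ℝ (Fin n)) i) ^ 2 * Real.exp (x i)) ∂(sphereUniform n)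

theorem exists_sq_pos_of_mem_sphere {n : ℕ}
    (u : Metric.sphere (0 : EuclideanSpace ℝ (Fin n)) 1) :
    ∃ i, 0 < ((u : EuclideanSpace ℝ (Fin n)) i) ^ 2 := by
  by_contra! h
  have hu := EuclideanSpace.norm_sq_eq (u : EuclideanSpace ℝ (Fin n))
  rw [norm_eq_of_mem_sphere u, Finset.sum_eq_zero fun i _ => by
    simpa using le_antisymm (h i) (sq_nonneg _)] at hu
  norm_num at hu

theorem integrable_log_sum_sq_mul_exp {n : ℕ} (x : Fin n → ℝ) :
    Integrable (fun u : Metric.sphere (0 : EuclideanSpace ℝ (Fin n)) 1 =>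
      Real.log (∑ i, ((u : EuclideanSpace ℝ (Fin n)) i) ^ 2 * Real.exp (x i)))
      (sphereUniform n) := by
  refine Continuous.integrable_of_hasCompactSupport ?_ (HasCompactSupport.of_compactSpace _)
  refine Continuous.log (by fun_prop) fun u => ?_
  obtain ⟨j, hj⟩ := exists_sq_pos_of_mem_sphere u
  exact (Finset.sum_pos' (fun i _ => by positivity) ⟨j, Finset.mem_univ j, by positivity⟩).ne'

theorem convexOn_pbarSpectral (n : ℕ) : ConvexOn ℝ Set.univ (pbarSpectral n) :=
  convexOn_integral convex_univ
    (fun u => convexOn_log_sum_mul_exp (fun _ => sq_nonneg _) (exists_sq_pos_of_mem_sphere u))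
    fun x _ => integrable_log_sum_sq_mul_exp x

theorem pbarSpectral_comp_perm {n : ℕ} (σ : Equiv.Perm (Fin n)) (x : Fin n → ℝ) :
    pbarSpectral n (x ∘ σ) = pbarSpectral n x := by
  let e := LinearIsometryEquiv.piLpCongrLeft 2 ℝ ℝ σ
  rw [pbarSpectral, pbarSpectral]
  conv_rhs => rw [← (measurePreserving_sphereHomeomorph e).integral_comp
    e.sphereHomeomorph.measurableEmbedding]
  refine integral_congr_ae (ae_of_all _ fun u => congrArg Real.log ?_)
  conv_rhs => rw [← Equiv.sum_comp σ]
  simp [e, LinearIsometryEquiv.sphereHomeomorph]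

theorem pbar_eq_pbarSpectral_eigs {n : ℕ} {Y : Matrix (Fin n) (Fin n) ℝ} (hY : Y.IsSymm) :
    pbar Y = pbarSpectral n (eigs Y) := by
  have hH := isHermitian_iff_isSymm.mpr hY
  let e := hH.eigenvectorBasis.repr
  rw [eigs_of_isSymm hY, pbarSpectral, ← (measurePreserving_sphereHomeomorph e).integral_comp
    e.sphereHomeomorph.measurableEmbedding]
  exact integral_congr_ae (ae_of_all _ fun u =>
    congrArg Real.log (hH.dotProduct_exp_mulVec_eq_sum (u : EuclideanSpace ℝ (Fin n))))

/-- Spectral representation `p̄(Y) = E_u log (∑ᵢ uᵢ² e^{λᵢ})`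
and convexity of `p̄` on the symmetric matrices. -/
theorem stmt8 (n : ℕ) (Y : Matrix (Fin n) (Fin n) ℝ) (hY : Y.IsSymm) :
    pbar Y = (∫ u, Real.log (∑ i, ((u : EuclideanSpace ℝ (Fin n)) i) ^ 2 *
        Real.exp (eigs Y i)) ∂(sphereUniform n)) ∧
      ConvexOn ℝ {A : Matrix (Fin n) (Fin n) ℝ | A.IsSymm} pbar :=
  ⟨pbar_eq_pbarSpectral_eigs hY,
    ((convexOn_pbarSpectral n).comp_eigs pbarSpectral_comp_perm).congr
      fun _ hA => (pbar_eq_pbarSpectral_eigs hA).symm⟩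
end
end

section
/- Let Y be a real symmetric n×n matrix with eigen-decomposition Y = Q diag(λ) Qᵀ (Q orthogonal), let u be uniformly distributed on the unit sphere S^{n-1} ⊂ ℝⁿ, and let P^{mw}(Z) = e^{Z}/tr(e^{Z}) denote the matrix multiplicative weights projection. Then P̄(Y) := E_u[e^{Y/2} u uᵀ e^{Y/2} / (uᵀ e^{Y} u)] satisfies P̄(Y) = E_u[P^{mw}(Y + Q·diag(log u_1², …, log u_n²)·Qᵀ)]; in particular P̄(Y) = Q·diag(E_u[∇lse(λ + (log u_1², …, log u_n²))])·Qᵀ, where lse(v) = log(Σ_i e^{v_i}) and ∇lse(v) = e^{v}/(Σ_i e^{v_i}) componentwise. -/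
open MeasureTheory Matrix

noncomputable section

/-!
Writing `Y = Q diag(λ) Qᵀ`, both `P_u` and `P^mw` commute with conjugation by the orthogonal
matrix `Q`, and the uniform measure on the sphere is invariant under `u ↦ Q u`; this reduces
everything to `Y = diag(λ)`. There `P_u(diag λ) = w wᵀ / ‖w‖²` with `w = e^{λ/2} ⊙ u`.
Flipping the sign of `uᵢ` preserves the measure and negates the off-diagonal entries of row `i`,
so the average is diagonal; its diagonal entries `e^{λᵢ} uᵢ² / ∑ⱼ e^{λⱼ} uⱼ²` equal
`∇lse(λ + log u²)ᵢ` whenever no coordinate of `u` vanishes, which holds almost surely.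
-/

open Metric
open scoped Pointwise

section UnitSphere

variable {E : Type*} [NormedAddCommGroup E] [NormedSpace ℝ E]

def LinearIsometryEquiv.unitSphereHomeomorph (T : E ≃ₗᵢ[ℝ] E) :
    sphere (0 : E) 1 ≃ₜ sphere (0 : E) 1 :=
  T.toHomeomorph.subtype fun x => by simp

@[simp]
lemma LinearIsometryEquiv.coe_unitSphereHomeomorph (T : E ≃ₗᵢ[ℝ] E) (u : sphere (0 : E) 1) :
    (T.unitSphereHomeomorph u : E) = T u :=
  rfl

lemma LinearIsometryEquiv.image_coe_preimage_unitSphereHomeomorph (T : E ≃ₗᵢ[ℝ] E)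
    (s : Set (sphere (0 : E) 1)) :
    ((↑) : sphere (0 : E) 1 → E) '' (T.unitSphereHomeomorph ⁻¹' s) = T ⁻¹' ((↑) '' s) := by
  ext x
  constructor
  · rintro ⟨u, hu, rfl⟩
    exact ⟨_, hu, rfl⟩
  · rintro ⟨v, hv, hvx⟩
    have hx : x ∈ sphere (0 : E) 1 := by
      rw [mem_sphere_zero_iff_norm, ← T.norm_map, ← hvx, norm_eq_of_mem_sphere]
    refine ⟨⟨x, hx⟩, ?_, rfl⟩
    rwa [Set.mem_preimage, show T.unitSphereHomeomorph ⟨x, hx⟩ = v from Subtype.ext hvx.symm]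

lemma LinearIsometryEquiv.preimage_smul_set_s9 (T : E ≃ₗᵢ[ℝ] E) (S : Set ℝ) (B : Set E) :
    T ⁻¹' (S • B) = S • T ⁻¹' B := by
  ext z
  simp only [Set.mem_preimage, Set.mem_smul]
  constructor
  · rintro ⟨r, hr, b, hb, hrb⟩
    refine ⟨r, hr, T.symm b, by simpa using hb, ?_⟩
    rw [← T.symm.map_smul, hrb, T.symm_apply_apply]
  · rintro ⟨r, hr, y, hy, rfl⟩
    exact ⟨r, hr, T y, hy, (T.map_smul r y).symm⟩

variable [MeasurableSpace E] [BorelSpace E]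

lemma LinearIsometryEquiv.measurePreserving_unitSphereHomeomorph {μ : Measure E}
    (T : E ≃ₗᵢ[ℝ] E) (hT : MeasurePreserving T μ μ) :
    MeasurePreserving T.unitSphereHomeomorph μ.toSphere μ.toSphere := by
  have hmeas := T.unitSphereHomeomorph.continuous.measurable
  refine ⟨hmeas, Measure.ext fun s hs => ?_⟩
  rw [Measure.map_apply hmeas hs, Measure.toSphere_apply' _ (hmeas hs),
    Measure.toSphere_apply' _ hs, T.image_coe_preimage_unitSphereHomeomorph,
    ← T.preimage_smul_set_s9, hT.measure_preimage_emb T.toHomeomorph.measurableEmbedding]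

variable [FiniteDimensional ℝ E]

lemma MeasureTheory.Measure.toSphere_setOf_apply_eq_zero (μ : Measure E) [μ.IsAddHaarMeasure]
    {φ : E →L[ℝ] ℝ} (hφ : φ ≠ 0) : μ.toSphere {u : sphere (0 : E) 1 | φ u = 0} = 0 := by
  have hmeas : MeasurableSet {u : sphere (0 : E) 1 | φ u = 0} :=
    (φ.continuous.comp continuous_subtype_val).measurable (measurableSet_singleton 0)
  have hker : LinearMap.ker (φ : E →ₗ[ℝ] ℝ) ≠ ⊤ := by
    rw [Ne, LinearMap.ker_eq_top]
    exact_mod_cast hφ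
  rw [Measure.toSphere_apply' _ hmeas]
  refine mul_eq_zero_of_right _ (measure_mono_null ?_ (Measure.addHaar_submodule μ _ hker))
  rintro _ ⟨r, -, _, ⟨u, hu, rfl⟩, rfl⟩
  simp_all

end UnitSphere

section SphereUniform

variable {n : ℕ}

instance : IsFiniteMeasure (sphereUniform n) :=
  ⟨by
    rw [sphereUniform, Measure.smul_apply, smul_eq_mul]
    exact (ENNReal.inv_mul_le_one _).trans_lt ENNReal.one_lt_top⟩

lemma LinearIsometryEquiv.measurePreserving_sphereUniform
    (T : EuclideanSpace ℝ (Fin n) ≃ₗᵢ[ℝ] EuclideanSpace ℝ (Fin n)) :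
    MeasurePreserving T.unitSphereHomeomorph (sphereUniform n) (sphereUniform n) :=
  (T.measurePreserving_unitSphereHomeomorph T.measurePreserving).smul_measure _

lemma integral_sphereUniform_comp (T : EuclideanSpace ℝ (Fin n) ≃ₗᵢ[ℝ] EuclideanSpace ℝ (Fin n))
    (f : sphere (0 : EuclideanSpace ℝ (Fin n)) 1 → ℝ) :
    ∫ u, f (T.unitSphereHomeomorph u) ∂(sphereUniform n) = ∫ u, f u ∂(sphereUniform n) :=
  T.measurePreserving_sphereUniform.integral_comp T.unitSphereHomeomorph.measurableEmbedding f

lemma ae_sphereUniform_coord_ne_zero :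
    ∀ᵐ u : sphere (0 : EuclideanSpace ℝ (Fin n)) 1 ∂(sphereUniform n),
      ∀ k, (u : EuclideanSpace ℝ (Fin n)) k ≠ 0 := by
  refine ae_all_iff.2 fun k => Measure.ae_smul_measure (ae_iff.2 ?_) _
  have hproj : EuclideanSpace.proj (𝕜 := ℝ) k ≠ 0 := fun h => by
    simpa using DFunLike.congr_fun h (EuclideanSpace.single k 1)
  simpa using Measure.toSphere_setOf_apply_eq_zero volume hproj

end SphereUniform

section OrthogonalIsometry

variable {ι : Type*} [Fintype ι] [DecidableEq ι]

def Matrix.orthogonalLinearIsometryEquiv {Q : Matrix ι ι ℝ} (hQ : Q ∈ orthogonalGroup ι ℝ) :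
    EuclideanSpace ℝ ι ≃ₗᵢ[ℝ] EuclideanSpace ℝ ι :=
  Unitary.linearIsometryEquiv ⟨toEuclideanCLM (𝕜 := ℝ) Q, Unitary.map_mem _ hQ⟩

lemma Matrix.orthogonalLinearIsometryEquiv_apply {Q : Matrix ι ι ℝ}
    (hQ : Q ∈ orthogonalGroup ι ℝ) (x : EuclideanSpace ℝ ι) (k : ι) :
    orthogonalLinearIsometryEquiv hQ x k = (Q *ᵥ fun i => x i) k :=
  rfl

lemma Matrix.diagonal_mem_orthogonalGroup {r : ι → ℝ}
    (hr : ∀ k, r k * r k = 1) : diagonal r ∈ orthogonalGroup ι ℝ := by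
  rw [mem_orthogonalGroup_iff', diagonal_transpose, diagonal_mul_diagonal, ← diagonal_one]
  exact congrArg diagonal (funext hr)

end OrthogonalIsometry

section Softmax

variable {ι : Type*} [Fintype ι]

/-- The gradient `∇lse` of `lse x = log ∑ᵢ exp xᵢ`. -/
def softmax (x : ι → ℝ) : ι → ℝ :=
  fun i => Real.exp (x i) / ∑ j, Real.exp (x j)

lemma abs_softmax_le_one (x : ι → ℝ) (i : ι) : |softmax x i| ≤ 1 := by
  have hsum : 0 < ∑ j, Real.exp (x j) :=
    Finset.sum_pos (fun j _ => Real.exp_pos _) ⟨i, Finset.mem_univ i⟩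
  rw [softmax, abs_of_nonneg (div_nonneg (Real.exp_pos _).le hsum.le)]
  exact div_le_one_of_le₀ (Finset.single_le_sum (fun j _ => (Real.exp_pos (x j)).le)
    (Finset.mem_univ i)) hsum.le

lemma abs_mul_le_sum_sq (w : ι → ℝ) (i j : ι) : |w i * w j| ≤ ∑ k, w k ^ 2 := by
  have hle (k : ι) : w k ^ 2 ≤ ∑ k, w k ^ 2 :=
    Finset.single_le_sum (fun k _ => sq_nonneg (w k)) (Finset.mem_univ k)
  rw [abs_mul]
  nlinarith [hle i, hle j, sq_abs (w i), sq_abs (w j), sq_nonneg (|w i| - |w j|)]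

end Softmax

lemma Real.exp_add_log_sq (a : ℝ) {x : ℝ} (hx : x ≠ 0) :
    Real.exp (a + Real.log (x ^ 2)) = (Real.exp (a / 2) * x) ^ 2 := by
  rw [Real.exp_add, Real.exp_log (pow_two_pos_of_ne_zero hx), mul_pow, ← Real.exp_nat_mul]
  congr 2
  push_cast
  ring

section Conjugation

variable {n : ℕ} {Q : Matrix (Fin n) (Fin n) ℝ}

lemma mexp_conj (hQ : Q ∈ orthogonalGroup (Fin n) ℝ) (Y : Matrix (Fin n) (Fin n) ℝ) :
    mexp (Q * Y * Qᵀ) = Q * mexp Y * Qᵀ := by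
  have hQQt : Q * Qᵀ = 1 := (mem_orthogonalGroup_iff _ _).1 hQ
  have hunit : IsUnit Q := ⟨⟨Q, Qᵀ, hQQt, (mem_orthogonalGroup_iff' _ _).1 hQ⟩, rfl⟩
  simpa only [mexp, inv_eq_right_inv hQQt] using Matrix.exp_conj Q Y hunit

lemma mexp_diagonal (d : Fin n → ℝ) :
    mexp (diagonal d) = diagonal fun i => Real.exp (d i) := by
  rw [mexp, Matrix.exp_diagonal, Pi.exp_def]
  simp [Real.exp_eq_exp_ℝ]

lemma trace_conj (hQ : Q ∈ orthogonalGroup (Fin n) ℝ) (M : Matrix (Fin n) (Fin n) ℝ) :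
    (Q * M * Qᵀ).trace = M.trace := by
  rw [trace_mul_cycle, (mem_orthogonalGroup_iff' _ _).1 hQ, Matrix.one_mul]

lemma Pmw_conj (hQ : Q ∈ orthogonalGroup (Fin n) ℝ) (Y : Matrix (Fin n) (Fin n) ℝ) :
    Pmw (Q * Y * Qᵀ) = Q * Pmw Y * Qᵀ := by
  rw [Pmw, Pmw, mexp_conj hQ, trace_conj hQ, Matrix.mul_smul, Matrix.smul_mul]

lemma Pmw_diagonal (d : Fin n → ℝ) : Pmw (diagonal d) = diagonal (softmax d) := by
  rw [Pmw, mexp_diagonal, trace_diagonal, ← diagonal_smul]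
  congr 1
  ext i
  simp [softmax, div_eq_inv_mul]

lemma Pu_conj (hQ : Q ∈ orthogonalGroup (Fin n) ℝ) (v : Fin n → ℝ)
    (Y : Matrix (Fin n) (Fin n) ℝ) :
    Pu (Q *ᵥ v) (Q * Y * Qᵀ) = Q * Pu v Y * Qᵀ := by
  have hQtQ : Qᵀ * Q = 1 := (mem_orthogonalGroup_iff' _ _).1 hQ
  have hhalf : (2 : ℝ)⁻¹ • (Q * Y * Qᵀ) = Q * ((2 : ℝ)⁻¹ • Y) * Qᵀ := by
    rw [Matrix.mul_smul, Matrix.smul_mul]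
  have hden : (Q *ᵥ v) ⬝ᵥ ((Q * mexp Y * Qᵀ) *ᵥ (Q *ᵥ v)) = v ⬝ᵥ (mexp Y *ᵥ v) := by
    rw [mulVec_mulVec, Matrix.mul_assoc, Matrix.mul_assoc, hQtQ, Matrix.mul_one,
      ← mulVec_mulVec, dotProduct_mulVec, ← vecMul_transpose, vecMul_vecMul, hQtQ, vecMul_one]
  have hnum : vecMulVec (Q *ᵥ v) (Q *ᵥ v) = Q * vecMulVec v v * Qᵀ := by
    rw [mul_vecMulVec, vecMulVec_mul, vecMul_transpose]
  rw [Pu, Pu, hhalf, mexp_conj hQ, mexp_conj hQ, hden, hnum]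
  have hcancel (X : Matrix (Fin n) (Fin n) ℝ) : Qᵀ * (Q * X) = X := by
    rw [← Matrix.mul_assoc, hQtQ, Matrix.one_mul]
  simp only [Matrix.mul_assoc, hcancel, Matrix.mul_smul, Matrix.smul_mul]

lemma Pu_diagonal_apply (v d : Fin n → ℝ) (i j : Fin n) :
    Pu v (diagonal d) i j = Real.exp (d i / 2) * v i * (Real.exp (d j / 2) * v j) /
      ∑ k, (Real.exp (d k / 2) * v k) ^ 2 := by
  have hhalf : (2 : ℝ)⁻¹ • diagonal d = diagonal fun k => d k / 2 := by
    rw [← diagonal_smul]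
    congr 1
    ext k
    simp [div_eq_inv_mul]
  have hsq (k : Fin n) : v k * (Real.exp (d k) * v k) = (Real.exp (d k / 2) * v k) ^ 2 := by
    rw [mul_pow, sq (Real.exp _), ← Real.exp_add, add_halves]
    ring
  rw [Pu, hhalf, mexp_diagonal, mexp_diagonal]
  simp only [Matrix.smul_apply, diagonal_mul, mul_diagonal, vecMulVec_apply, dotProduct,
    mulVec_diagonal, smul_eq_mul, hsq]
  ring

lemma abs_Pu_diagonal_apply_le_one (v d : Fin n → ℝ) (i j : Fin n) :
    |Pu v (diagonal d) i j| ≤ 1 := by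
  have hsum : 0 ≤ ∑ k, (Real.exp (d k / 2) * v k) ^ 2 :=
    Finset.sum_nonneg fun k _ => sq_nonneg _
  rw [Pu_diagonal_apply, abs_div, abs_of_nonneg hsum]
  exact div_le_one_of_le₀ (abs_mul_le_sum_sq (fun k => Real.exp (d k / 2) * v k) i j) hsum

end Conjugation

section EntrywiseIntegral

variable {α : Type*} [MeasurableSpace α] {μ : Measure α} {ι : Type*}

lemma integral_mul_mul_apply [Fintype ι] {F : α → Matrix ι ι ℝ}
    (hF : ∀ i j, Integrable (fun x => F x i j) μ) (A B : Matrix ι ι ℝ) (i j : ι) :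
    ∫ x, (A * F x * B) i j ∂μ = (A * Matrix.of (fun i j => ∫ x, F x i j ∂μ) * B) i j := by
  have hterm (k l : ι) : Integrable (fun x => A i k * F x k l * B l j) μ :=
    ((hF k l).const_mul _).mul_const _
  simp only [mul_apply, of_apply, Finset.sum_mul]
  rw [integral_finsetSum _ fun l _ => integrable_finsetSum _ fun k _ => hterm k l]
  refine Finset.sum_congr rfl fun l _ => ?_
  rw [integral_finsetSum _ fun k _ => hterm k l]
  exact Finset.sum_congr rfl fun k _ => by rw [integral_mul_const, integral_const_mul]

lemma of_integral_diagonal [DecidableEq ι] (f : α → ι → ℝ) :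
    Matrix.of (fun i j => ∫ x, diagonal (f x) i j ∂μ) = diagonal fun i => ∫ x, f x i ∂μ := by
  ext i j
  rcases eq_or_ne i j with rfl | hij
  · simp
  · simp [hij]

lemma MeasureTheory.MeasurePreserving.integral_eq_zero_of_comp_eq_neg {f : α → α}
    (hf : MeasurePreserving f μ μ) (he : MeasurableEmbedding f) {g : α → ℝ}
    (hg : ∀ x, g (f x) = -g x) :
    ∫ x, g x ∂μ = 0 := by
  have h := hf.integral_comp he g
  simp only [hg, integral_neg] at h
  linarith

lemma of_integral_Pmw_conj_add {n : ℕ}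
    {Q : Matrix (Fin n) (Fin n) ℝ} (hQ : Q ∈ orthogonalGroup (Fin n) ℝ) (d : Fin n → ℝ)
    {f : α → Fin n → ℝ} (hf : ∀ i, Integrable (fun x => softmax (fun k => d k + f x k) i) μ) :
    Matrix.of (fun i j => ∫ x, Pmw (Q * diagonal d * Qᵀ + Q * diagonal (f x) * Qᵀ) i j ∂μ) =
      Q * diagonal (fun i => ∫ x, softmax (fun k => d k + f x k) i ∂μ) * Qᵀ := by
  have hPmw (x : α) : Pmw (Q * diagonal d * Qᵀ + Q * diagonal (f x) * Qᵀ) =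
      Q * diagonal (softmax fun k => d k + f x k) * Qᵀ := by
    rw [← Matrix.add_mul, ← Matrix.mul_add, diagonal_add, Pmw_conj hQ, Pmw_diagonal]
  have hdiag (k l : Fin n) :
      Integrable (fun x => diagonal (softmax fun k => d k + f x k) k l) μ := by
    rcases eq_or_ne k l with rfl | hkl
    · simpa using hf k
    · simp [hkl]
  ext i j
  rw [of_apply]
  simp only [hPmw]
  rw [integral_mul_mul_apply hdiag, of_integral_diagonal]

end EntrywiseIntegral

section AverageProjection

variable {n : ℕ}

lemma integrable_Pu_diagonal (d : Fin n → ℝ) (i j : Fin n) :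
    Integrable (fun u : sphere (0 : EuclideanSpace ℝ (Fin n)) 1 =>
      Pu (fun k => (u : EuclideanSpace ℝ (Fin n)) k) (diagonal d) i j) (sphereUniform n) := by
  refine Integrable.of_bound ?_ 1 (ae_of_all _ fun u => abs_Pu_diagonal_apply_le_one _ d i j)
  simp only [Pu_diagonal_apply]
  exact Measurable.aestronglyMeasurable (by fun_prop)

lemma integrable_softmax_add_log_sq (d : Fin n → ℝ) (i : Fin n) :
    Integrable (fun u : sphere (0 : EuclideanSpace ℝ (Fin n)) 1 =>
      softmax (fun k => d k + Real.log (((u : EuclideanSpace ℝ (Fin n)) k) ^ 2)) i)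
      (sphereUniform n) :=
  Integrable.of_bound (Measurable.aestronglyMeasurable (by unfold softmax; fun_prop)) 1
    (ae_of_all _ fun u => abs_softmax_le_one _ i)

lemma Pbar_conj {Q : Matrix (Fin n) (Fin n) ℝ} (hQ : Q ∈ orthogonalGroup (Fin n) ℝ)
    {Y : Matrix (Fin n) (Fin n) ℝ}
    (hY : ∀ i j, Integrable (fun u : sphere (0 : EuclideanSpace ℝ (Fin n)) 1 =>
      Pu (fun k => (u : EuclideanSpace ℝ (Fin n)) k) Y i j) (sphereUniform n)) :
    Pbar (Q * Y * Qᵀ) = Q * Pbar Y * Qᵀ := by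
  ext i j
  rw [Pbar, of_apply, ← integral_sphereUniform_comp (orthogonalLinearIsometryEquiv hQ)]
  simp only [LinearIsometryEquiv.coe_unitSphereHomeomorph,
    orthogonalLinearIsometryEquiv_apply, Pu_conj hQ]
  exact integral_mul_mul_apply hY Q Qᵀ i j

lemma Pbar_diagonal (d : Fin n → ℝ) :
    Pbar (diagonal d) = diagonal fun i => ∫ u, softmax
      (fun k => d k + Real.log (((u : EuclideanSpace ℝ (Fin n)) k) ^ 2)) i ∂(sphereUniform n) := by
  ext i j
  rcases eq_or_ne i j with rfl | hij
  · rw [Pbar, of_apply, diagonal_apply_eq]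
    refine integral_congr_ae (ae_sphereUniform_coord_ne_zero.mono fun u hu => ?_)
    simp only [Pu_diagonal_apply, softmax, Real.exp_add_log_sq _ (hu _)]
    ring
  · rw [Pbar, of_apply, diagonal_apply_ne _ hij]
    set r : Fin n → ℝ := fun k => if k = i then -1 else 1
    have hr : diagonal r ∈ orthogonalGroup (Fin n) ℝ :=
      diagonal_mem_orthogonalGroup fun k => by by_cases hk : k = i <;> simp [r, hk]
    set T := orthogonalLinearIsometryEquiv hr
    refine T.measurePreserving_sphereUniform.integral_eq_zero_of_comp_eq_neg
      T.unitSphereHomeomorph.measurableEmbedding fun u => ?_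
    simp only [LinearIsometryEquiv.coe_unitSphereHomeomorph, T,
      orthogonalLinearIsometryEquiv_apply, mulVec_diagonal, Pu_diagonal_apply]
    have hsq (k : Fin n) (x : ℝ) : (Real.exp (d k / 2) * (r k * x)) ^ 2 =
        (Real.exp (d k / 2) * x) ^ 2 := by
      by_cases hk : k = i <;> simp [r, hk]
    simp only [hsq]
    rw [show r i = -1 from if_pos rfl, show r j = 1 from if_neg hij.symm]
    ring

end AverageProjection

/-- `P̄(Y) = E_u P^{mw}(Y + Q diag(log uᵢ²) Qᵀ)`; in particular
`P̄(Y) = Q diag(E_u ∇lse(λ + log u²)) Qᵀ`. -/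
theorem stmt9 (n : ℕ) (Y Q : Matrix (Fin n) (Fin n) ℝ) (lam : Fin n → ℝ)
    (hQ : Qᵀ * Q = 1) (hY : Y = Q * Matrix.diagonal lam * Qᵀ) :
    Pbar Y = (Matrix.of fun i j => ∫ u,
        Pmw (Y + Q * Matrix.diagonal
          (fun k => Real.log (((u : EuclideanSpace ℝ (Fin n)) k) ^ 2)) * Qᵀ) i j
        ∂(sphereUniform n)) ∧
      Pbar Y = Q * Matrix.diagonal (fun i => ∫ u,
        Real.exp (lam i + Real.log (((u : EuclideanSpace ℝ (Fin n)) i) ^ 2)) /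
          ∑ j, Real.exp (lam j + Real.log (((u : EuclideanSpace ℝ (Fin n)) j) ^ 2))
        ∂(sphereUniform n)) * Qᵀ := by
  subst hY
  have hQ' : Q ∈ orthogonalGroup (Fin n) ℝ := (mem_orthogonalGroup_iff' _ _).2 hQ
  have hPbar : Pbar (Q * diagonal lam * Qᵀ) = Q * diagonal (fun i => ∫ u, softmax
      (fun k => lam k + Real.log (((u : EuclideanSpace ℝ (Fin n)) k) ^ 2)) i
      ∂(sphereUniform n)) * Qᵀ := by
    rw [Pbar_conj hQ' (integrable_Pu_diagonal lam), Pbar_diagonal]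
  exact ⟨hPbar.trans
    (of_integral_Pmw_conj_add hQ' lam (integrable_softmax_add_log_sq lam)).symm, hPbar⟩
end
end

section
/- For any real symmetric n×n matrices Y and D, the function φ(t) = log tr(e^{Y + tD}) is twice differentiable and satisfies φ''(0) ≤ tr(D² e^{Y}) / tr(e^{Y}); equivalently, the second directional derivative of the matrix softmax p^{mw}(Y) = log tr(e^{Y}) in direction D is bounded by ⟨D², P^{mw}(Y)⟩, where P^{mw}(Y) = e^{Y}/tr(e^{Y}) and ⟨A,B⟩ = tr(AᵀB). -/
open MeasureTheory Matrix

noncomputable section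

/-!
Write `f s = tr (exp (Y + s • D))`, so that `φ = log ∘ f` and
`φ'' = f'' / f - (f' / f) ^ 2 ≤ f'' / f`.
Differentiating the exponential series termwise gives `f' s = tr (exp (Y + s • D) * D)` and
`f'' 0 = tr (dexp Y D * D)`, where `dexp Y D` is the derivative of `exp` at `Y` in the direction
`D`.
In an eigenbasis `Y = diag w` (Daleckii–Krein), `dexp Y D` is the entrywise product of `D` with the
divided differences `(exp w_p - exp w_q) / (w_p - w_q)`. Each of these is at most
`(exp w_p + exp w_q) / 2` (logarithmic mean ≤ arithmetic mean), and symmetrising in `p, q` gives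
`f'' 0 ≤ ∑ D_pq ^ 2 exp w_p = tr (D * D * exp Y)`.
-/

open NormedSpace Finset
open scoped Nat

theorem hasDerivAt_tsum_of_bounded_on_balls {F : Type*} [NormedAddCommGroup F] [NormedSpace ℝ F]
    [CompleteSpace F] {g g' : ℕ → ℝ → F} (hg : ∀ k s, HasDerivAt (g k) (g' k s) s)
    (hbound : ∀ R, ∃ u : ℕ → ℝ, Summable u ∧ ∀ k s, |s| < R → ‖g' k s‖ ≤ u k)
    (h0 : Summable fun k => g k 0) (t : ℝ) :
    HasDerivAt (fun s => ∑' k, g k s) (∑' k, g' k t) t := by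
  obtain ⟨u, hu, hgu⟩ := hbound (|t| + 1)
  refine hasDerivAt_tsum_of_isPreconnected hu Metric.isOpen_ball
    (convex_ball (0 : ℝ) _).isPreconnected (fun k s _ => hg k s)
    (fun k s hs => hgu k s (by simpa using hs)) (by simp; positivity) h0 (by simp)

theorem Real.hasSum_pow_div_factorial (x : ℝ) :
    HasSum (fun k : ℕ => x ^ k / k !) (Real.exp x) := by
  simpa [Real.exp_eq_exp_ℝ] using expSeries_div_hasSum_exp x

theorem Real.hasSum_nat_mul_pow_div_factorial (a : ℝ) :
    HasSum (fun k : ℕ => k * a ^ (k - 1) / k !) (Real.exp a) := by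
  refine (hasSum_nat_add_iff' 1).mp ?_
  have hshift : (fun k : ℕ => ((k + 1 : ℕ) : ℝ) * a ^ (k + 1 - 1) / (k + 1)!) =
      fun k => a ^ k / k ! := by
    ext k
    rw [Nat.factorial_succ]
    push_cast
    field_simp
  rw [hshift]
  simpa using Real.hasSum_pow_div_factorial a

theorem Real.exp_sub_one_le_mul_exp_add_one_div_two {x : ℝ} (hx : 0 ≤ x) :
    Real.exp x - 1 ≤ x * (Real.exp x + 1) / 2 := by
  let g : ℝ → ℝ := fun y => y * (Real.exp y + 1) / 2 - (Real.exp y - 1)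
  have hg : ∀ y, HasDerivAt g ((1 - Real.exp y + y * Real.exp y) / 2) y := by
    intro y
    refine ((((hasDerivAt_id y).mul ((Real.hasDerivAt_exp y).add_const 1)).div_const 2).sub
      ((Real.hasDerivAt_exp y).sub_const 1)).congr_deriv ?_
    simp only [id]
    ring
  have hmono : Monotone g := by
    refine monotone_of_deriv_nonneg (fun y => (hg y).differentiableAt) fun y => ?_
    rw [(hg y).deriv]
    have h := Real.add_one_le_exp (-y)
    have he : Real.exp (-y) * Real.exp y = 1 := by
      rw [← Real.exp_add, neg_add_cancel, Real.exp_zero]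
    -- the derivative is nonnegative because `exp (-y) ≥ 1 - y`
    nlinarith [Real.exp_pos y]
  have := hmono hx
  simp only [g, zero_mul, zero_div, Real.exp_zero, sub_self] at this
  linarith

theorem Real.exp_sub_exp_le {a b : ℝ} (hba : b ≤ a) :
    Real.exp a - Real.exp b ≤ (a - b) * (Real.exp a + Real.exp b) / 2 := by
  have h := mul_le_mul_of_nonneg_left
    (Real.exp_sub_one_le_mul_exp_add_one_div_two (sub_nonneg.mpr hba)) (Real.exp_pos b).le
  have he : Real.exp b * Real.exp (a - b) = Real.exp a := by rw [← Real.exp_add, add_sub_cancel]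
  nlinarith

section BanachAlgebra

variable {𝔸 : Type*} [NormedRing 𝔸] [NormOneClass 𝔸]

theorem norm_sum_pow_mul_mul_pow_le {X Y : 𝔸} (B : 𝔸) {r : ℝ} (hX : ‖X‖ ≤ r) (hY : ‖Y‖ ≤ r)
    (k : ℕ) : ‖∑ i ∈ range k, X ^ (k - 1 - i) * B * Y ^ i‖ ≤ k * r ^ (k - 1) * ‖B‖ := by
  have hr : 0 ≤ r := (norm_nonneg X).trans hX
  calc ‖∑ i ∈ range k, X ^ (k - 1 - i) * B * Y ^ i‖
      ≤ ∑ i ∈ range k, r ^ (k - 1) * ‖B‖ := by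
        refine norm_sum_le_of_le _ fun i hi => ?_
        have hi : k - 1 - i + i = k - 1 := by grind
        calc ‖X ^ (k - 1 - i) * B * Y ^ i‖ ≤ ‖X‖ ^ (k - 1 - i) * ‖B‖ * ‖Y‖ ^ i :=
              (norm_mul_le _ _).trans (mul_le_mul (norm_mul_le_of_le (norm_pow_le _ _) le_rfl)
                (norm_pow_le _ _) (norm_nonneg _) (by positivity))
          _ ≤ r ^ (k - 1 - i) * ‖B‖ * r ^ i := by gcongr
          _ = r ^ (k - 1) * ‖B‖ := by rw [mul_right_comm, ← pow_add, hi]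
    _ = k * r ^ (k - 1) * ‖B‖ := by simp [mul_assoc]

variable [NormedAlgebra ℝ 𝔸]

theorem norm_factorial_inv_smul_sum_pow_mul_mul_pow_le {X Y : 𝔸} (B : 𝔸) {r : ℝ}
    (hX : ‖X‖ ≤ r) (hY : ‖Y‖ ≤ r) (k : ℕ) :
    ‖(k !⁻¹ : ℝ) • ∑ i ∈ range k, X ^ (k - 1 - i) * B * Y ^ i‖ ≤
      k * r ^ (k - 1) / k ! * ‖B‖ := by
  rw [norm_smul, norm_inv, Real.norm_natCast, inv_mul_eq_div, div_mul_eq_mul_div,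
    div_le_div_iff_of_pos_right (by positivity)]
  exact norm_sum_pow_mul_mul_pow_le B hX hY k

theorem summable_nat_mul_pow_div_factorial_mul (r c : ℝ) :
    Summable fun k : ℕ => k * r ^ (k - 1) / k ! * c :=
  (Real.hasSum_nat_mul_pow_div_factorial r).summable.mul_right c

variable [CompleteSpace 𝔸]

theorem summable_factorial_inv_smul_sum_pow_mul_mul_pow (X Y B : 𝔸) :
    Summable fun k : ℕ => (k !⁻¹ : ℝ) • ∑ i ∈ range k, X ^ (k - 1 - i) * B * Y ^ i :=
  .of_norm_bounded (summable_nat_mul_pow_div_factorial_mul _ ‖B‖)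
    (norm_factorial_inv_smul_sum_pow_mul_mul_pow_le B (le_max_left ‖X‖ ‖Y‖) (le_max_right _ _))

def dexp (A B : 𝔸) : 𝔸 :=
  ∑' k : ℕ, (k !⁻¹ : ℝ) • ∑ i ∈ range k, A ^ (k - 1 - i) * B * A ^ i

theorem hasDerivAt_exp_add_smul (A B : 𝔸) (t : ℝ) :
    HasDerivAt (fun s : ℝ => exp (A + s • B)) (dexp (A + t • B) B) t := by
  simp only [exp_eq_tsum ℝ]
  refine hasDerivAt_tsum_of_bounded_on_balls (g := fun k s => (k !⁻¹ : ℝ) • (A + s • B) ^ k)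
    (g' := fun k s =>
      (k !⁻¹ : ℝ) • ∑ i ∈ range k, (A + s • B) ^ (k - 1 - i) * B * (A + s • B) ^ i)
    (fun k s => ?_) (fun R => ?_) (expSeries_summable' (A + (0 : ℝ) • B)) t
  · have hM : HasDerivAt (fun s : ℝ => A + s • B) B s := by
      simpa using ((hasDerivAt_id s).smul_const B).const_add A
    have h := (hM.fun_pow' k).const_smul (k !⁻¹ : ℝ)
    simp only [Nat.pred_eq_sub_one] at h
    exact h
  · refine ⟨_, summable_nat_mul_pow_div_factorial_mul (‖A‖ + R * ‖B‖) ‖B‖, fun k s hs => ?_⟩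
    have hM : ‖A + s • B‖ ≤ ‖A‖ + R * ‖B‖ := (norm_add_le _ _).trans <| by
      rw [norm_smul, Real.norm_eq_abs]; gcongr
    exact norm_factorial_inv_smul_sum_pow_mul_mul_pow_le B hM hM k

theorem dexp_units_conj (u : 𝔸ˣ) (A B : 𝔸) :
    dexp (u * A * ↑u⁻¹) (u * B * ↑u⁻¹) = u * dexp A B * ↑u⁻¹ := by
  have hconj := (ContinuousLinearMap.mulLeftRight ℝ 𝔸 u ↑u⁻¹).map_tsum
    (summable_factorial_inv_smul_sum_pow_mul_mul_pow A A B)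
  simp only [ContinuousLinearMap.mulLeftRight_apply] at hconj
  rw [dexp, dexp, hconj]
  congr with k
  rw [mul_smul_comm, smul_mul_assoc, Finset.mul_sum, Finset.sum_mul]
  congr 1
  refine Finset.sum_congr rfl fun i _ => ?_
  rw [Units.conj_pow, Units.conj_pow]
  simp only [mul_assoc, Units.inv_mul_cancel_left]

end BanachAlgebra

/-- The divided difference `(exp a - exp b) / (a - b)`, written as a power series so that it also
makes sense on the diagonal `a = b`. -/
def expDivDiff (a b : ℝ) : ℝ :=
  ∑' k : ℕ, (k !⁻¹ : ℝ) * ∑ i ∈ range k, a ^ i * b ^ (k - 1 - i)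

theorem summable_expDivDiff (a b : ℝ) :
    Summable fun k : ℕ => (k !⁻¹ : ℝ) * ∑ i ∈ range k, a ^ i * b ^ (k - 1 - i) :=
  (summable_factorial_inv_smul_sum_pow_mul_mul_pow b a (1 : ℝ)).congr fun k => by
    simp only [smul_eq_mul, mul_one]
    exact congrArg _ (sum_congr rfl fun i _ => mul_comm _ _)

theorem expDivDiff_self (a : ℝ) : expDivDiff a a = Real.exp a := by
  refine ((summable_expDivDiff a a).hasSum.unique ?_)
  simp only [geom_sum₂_self]
  convert Real.hasSum_nat_mul_pow_div_factorial a using 2 with k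
  ring

theorem expDivDiff_mul_sub (a b : ℝ) : expDivDiff a b * (a - b) = Real.exp a - Real.exp b := by
  have h := (summable_expDivDiff a b).hasSum.mul_right (a - b)
  simp only [mul_assoc, geom_sum₂_mul] at h
  refine h.unique ?_
  have hterm : (fun k : ℕ => (k !⁻¹ : ℝ) * (a ^ k - b ^ k)) =
      fun k => a ^ k / (k ! : ℝ) - b ^ k / (k ! : ℝ) := by
    ext k
    ring
  rw [hterm]
  exact (Real.hasSum_pow_div_factorial a).sub (Real.hasSum_pow_div_factorial b)

theorem expDivDiff_le (a b : ℝ) : expDivDiff a b ≤ (Real.exp a + Real.exp b) / 2 := by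
  rcases lt_trichotomy a b with hab | rfl | hab
  · refine le_of_mul_le_mul_right ?_ (sub_pos.mpr hab)
    linarith [expDivDiff_mul_sub a b, Real.exp_sub_exp_le hab.le]
  · rw [expDivDiff_self]
    linarith
  · refine le_of_mul_le_mul_right ?_ (sub_pos.mpr hab)
    rw [expDivDiff_mul_sub]
    linarith [Real.exp_sub_exp_le hab.le]

theorem sum_mul_expDivDiff_le {ι : Type*} [Fintype ι] {c : ι → ι → ℝ} (hc : ∀ p q, 0 ≤ c p q)
    (hsymm : ∀ p q, c p q = c q p) (w : ι → ℝ) :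
    ∑ p, ∑ q, c p q * expDivDiff (w p) (w q) ≤ ∑ p, ∑ q, c p q * Real.exp (w p) := by
  have hswap : ∑ p, ∑ q, c p q * Real.exp (w q) = ∑ p, ∑ q, c p q * Real.exp (w p) := by
    rw [Finset.sum_comm]
    simp_rw [hsymm]
  calc ∑ p, ∑ q, c p q * expDivDiff (w p) (w q)
      ≤ ∑ p, ∑ q, c p q * ((Real.exp (w p) + Real.exp (w q)) / 2) := by
        gcongr with p _ q _
        exacts [hc p q, expDivDiff_le _ _]
    _ = (∑ p, ∑ q, c p q * Real.exp (w p) + ∑ p, ∑ q, c p q * Real.exp (w q)) / 2 := by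
        simp only [mul_add, mul_div_assoc', add_div, Finset.sum_add_distrib, Finset.sum_div]
    _ = ∑ p, ∑ q, c p q * Real.exp (w p) := by rw [hswap]; ring

section Matrix

open scoped Matrix.Norms.Operator

variable {ι : Type*} [Fintype ι]

theorem Matrix.hasSum_trace {f : ℕ → Matrix ι ι ℝ} {X : Matrix ι ι ℝ} (hf : HasSum f X) :
    HasSum (fun k => (f k).trace) X.trace :=
  hf.mapL (LinearMap.toContinuousLinearMap (traceLinearMap ι ℝ ℝ))

variable [DecidableEq ι]

theorem Matrix.trace_sum_pow_mul_mul_pow (A B : Matrix ι ι ℝ) (k : ℕ) :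
    (∑ i ∈ range k, A ^ (k - 1 - i) * B * A ^ i).trace = k * (A ^ (k - 1) * B).trace := by
  rw [trace_sum, sum_congr rfl fun i hi => ?_, sum_const, card_range, nsmul_eq_mul]
  rw [trace_mul_cycle, ← pow_add, Nat.add_sub_of_le (by grind)]

theorem Matrix.trace_dexp [Nonempty ι] (A B : Matrix ι ι ℝ) :
    (dexp A B).trace = (exp A * B).trace := by
  have hexp := hasSum_trace ((exp_series_hasSum_exp' (𝕂 := ℝ) A).mul_right B)
  have hdexp := hasSum_trace (summable_factorial_inv_smul_sum_pow_mul_mul_pow A A B).hasSum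
  have hshift : ∀ k : ℕ, (((k + 1) ! : ℝ)⁻¹ •
      ∑ i ∈ range (k + 1), A ^ (k + 1 - 1 - i) * B * A ^ i).trace =
      ((k !⁻¹ : ℝ) • A ^ k * B).trace := by
    intro k
    rw [trace_smul, trace_sum_pow_mul_mul_pow, smul_mul_assoc, trace_smul, smul_eq_mul,
      smul_eq_mul, Nat.factorial_succ, Nat.add_sub_cancel]
    push_cast
    field_simp
  refine hdexp.unique ((hasSum_nat_add_iff' 1).mp ?_)
  simp only [hshift]
  simp only [range_one, sum_singleton, range_zero, sum_empty, smul_zero, trace_zero, sub_zero]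
  exact hexp

theorem Matrix.IsHermitian.exists_eq_units_conj_diagonal {A : Matrix ι ι ℝ}
    (hA : A.IsHermitian) : ∃ (u : (Matrix ι ι ℝ)ˣ) (w : ι → ℝ),
      A = (u : Matrix ι ι ℝ) * diagonal w * (↑u⁻¹ : Matrix ι ι ℝ) ∧
      (↑u⁻¹ : Matrix ι ι ℝ) = (u : Matrix ι ι ℝ)ᵀ := by
  refine ⟨Unitary.toUnits hA.eigenvectorUnitary, hA.eigenvalues, ?_, ?_⟩
  · conv_lhs => rw [hA.spectral_theorem]
    simp [RCLike.ofReal_real_eq_id]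
  · simp [star_eq_conjTranspose]

theorem Matrix.dexp_diagonal_apply (w : ι → ℝ) (E : Matrix ι ι ℝ) (p q : ι) :
    dexp (diagonal w) E p q = expDivDiff (w p) (w q) * E p q := by
  have : Nonempty ι := ⟨p⟩
  have h := (summable_factorial_inv_smul_sum_pow_mul_mul_pow (diagonal w) (diagonal w) E).hasSum
  refine (Pi.hasSum.mp (Pi.hasSum.mp h p) q).unique ?_
  have hterm : ∀ k : ℕ, ((k !⁻¹ : ℝ) • ∑ i ∈ range k,
      diagonal w ^ (k - 1 - i) * E * diagonal w ^ i) p q =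
      (k !⁻¹ : ℝ) * (∑ i ∈ range k, w p ^ i * w q ^ (k - 1 - i)) * E p q := by
    intro k
    simp only [smul_apply, sum_apply, diagonal_pow, mul_diagonal, diagonal_mul, smul_eq_mul,
      Pi.pow_apply]
    rw [geom_sum₂_comm, mul_assoc, sum_mul]
    exact congrArg _ (sum_congr rfl fun i _ => by ring)
  simp only [hterm]
  exact (summable_expDivDiff (w p) (w q)).hasSum.mul_right (E p q)

theorem Matrix.trace_dexp_diagonal_mul (w : ι → ℝ) (B : Matrix ι ι ℝ) :
    (dexp (diagonal w) B * B).trace = ∑ p, ∑ q, B p q * B q p * expDivDiff (w p) (w q) := by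
  simp only [trace, diag, mul_apply, dexp_diagonal_apply]
  exact sum_congr rfl fun p _ => sum_congr rfl fun q _ => by ring

theorem Matrix.trace_mul_mul_exp_diagonal (A B : Matrix ι ι ℝ) (w : ι → ℝ) :
    (A * B * exp (diagonal w)).trace = ∑ p, ∑ q, A p q * B q p * Real.exp (w p) := by
  rw [exp_diagonal]
  simp only [trace, diag, mul_diagonal]
  simp only [mul_apply, sum_mul, Pi.coe_exp, ← Real.exp_eq_exp_ℝ]

theorem Matrix.trace_dexp_mul_le [Nonempty ι] {Y D : Matrix ι ι ℝ} (hY : Y.IsHermitian)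
    (hD : D.IsSymm) : (dexp Y D * D).trace ≤ (D * D * exp Y).trace := by
  obtain ⟨u, w, rfl, hu⟩ := hY.exists_eq_units_conj_diagonal
  set B : Matrix ι ι ℝ := (↑u⁻¹ : Matrix ι ι ℝ) * D * (u : Matrix ι ι ℝ)
  have hDB : D = (u : Matrix ι ι ℝ) * B * (↑u⁻¹ : Matrix ι ι ℝ) := by simp [B, mul_assoc]
  have hB : B.IsSymm := by
    simp only [IsSymm, B, transpose_mul, hu, transpose_transpose, hD.eq, mul_assoc]
  have hconj : ∀ X Z : Matrix ι ι ℝ, ((u : Matrix ι ι ℝ) * X * (↑u⁻¹ : Matrix ι ι ℝ)) *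
      ((u : Matrix ι ι ℝ) * Z * (↑u⁻¹ : Matrix ι ι ℝ)) =
      (u : Matrix ι ι ℝ) * (X * Z) * (↑u⁻¹ : Matrix ι ι ℝ) := by
    simp [mul_assoc]
  rw [hDB, dexp_units_conj, Matrix.exp_units_conj, hconj, hconj, hconj, trace_units_conj,
    trace_units_conj, trace_dexp_diagonal_mul, trace_mul_mul_exp_diagonal]
  exact sum_mul_expDivDiff_le (fun p q => hB.apply p q ▸ mul_self_nonneg _)
    (fun p q => mul_comm _ _) w

theorem Matrix.IsHermitian.trace_exp_pos [Nonempty ι] {Y : Matrix ι ι ℝ} (hY : Y.IsHermitian) :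
    0 < (NormedSpace.exp Y).trace := by
  obtain ⟨u, w, rfl, -⟩ := hY.exists_eq_units_conj_diagonal
  rw [Matrix.exp_units_conj, trace_units_conj, exp_diagonal, trace_diagonal]
  exact sum_pos (fun p _ => by simpa [← Real.exp_eq_exp_ℝ] using Real.exp_pos (w p))
    univ_nonempty

theorem Matrix.hasDerivAt_trace_exp_add_smul_mul [Nonempty ι] (Y D C : Matrix ι ι ℝ) (t : ℝ) :
    HasDerivAt (fun s : ℝ => (exp (Y + s • D) * C).trace) (dexp (Y + t • D) D * C).trace t :=
  (LinearMap.toContinuousLinearMap (traceLinearMap ι ℝ ℝ)).hasFDerivAt.comp_hasDerivAt t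
    ((hasDerivAt_exp_add_smul Y D t).mul_const C)

theorem Matrix.hasDerivAt_trace_exp_add_smul [Nonempty ι] (Y D : Matrix ι ι ℝ) (t : ℝ) :
    HasDerivAt (fun s : ℝ => (exp (Y + s • D)).trace) (exp (Y + t • D) * D).trace t := by
  simpa [trace_dexp] using hasDerivAt_trace_exp_add_smul_mul Y D 1 t

end Matrix

/-- Second-order bound for the matrix softmax:
`φ(t) = log tr e^{Y+tD}` is twice differentiable and `φ''(0) ≤ ⟨D², P^{mw}(Y)⟩`. -/
theorem stmt10 (n : ℕ) (Y D : Matrix (Fin n) (Fin n) ℝ) (hY : Y.IsSymm) (hD : D.IsSymm) :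
    (∀ t : ℝ, DifferentiableAt ℝ (fun s : ℝ => Real.log ((mexp (Y + s • D)).trace)) t) ∧
      (∀ t : ℝ, DifferentiableAt ℝ
        (deriv fun s : ℝ => Real.log ((mexp (Y + s • D)).trace)) t) ∧
      deriv (deriv fun s : ℝ => Real.log ((mexp (Y + s • D)).trace)) 0 ≤
        minner (D * D) (Pmw Y) := by
  rcases isEmpty_or_nonempty (Fin n) with hn | hn
  · simp [Matrix.trace, minner]
  have hpos : ∀ s : ℝ, 0 < (mexp (Y + s • D)).trace := fun s =>
    (isHermitian_iff_isSymm.mpr (hY.add (hD.smul s))).trace_exp_pos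
  have hf := Matrix.hasDerivAt_trace_exp_add_smul Y D
  have hg := Matrix.hasDerivAt_trace_exp_add_smul_mul Y D D
  have hlog : deriv (fun s : ℝ => Real.log ((mexp (Y + s • D)).trace)) =
      fun s => (exp (Y + s • D) * D).trace / (exp (Y + s • D)).trace :=
    funext fun s => ((hf s).log (hpos s).ne').deriv
  refine ⟨fun t => ((hf t).log (hpos t).ne').differentiableAt,
    fun t => hlog ▸ ((hg t).fun_div (hf t) (hpos t).ne').differentiableAt, ?_⟩
  rw [hlog, ((hg 0).fun_div (hf 0) (hpos 0).ne').deriv]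
  simp only [zero_smul, add_zero]
  have hP : 0 < (exp Y).trace := by simpa [mexp] using hpos 0
  open scoped Matrix.Norms.Operator in
  calc _ ≤ (dexp Y D * D).trace / (exp Y).trace := by
        rw [div_le_div_iff₀ (by positivity) hP]
        nlinarith [mul_nonneg (mul_self_nonneg (exp Y * D).trace) hP.le]
    _ ≤ (D * D * exp Y).trace / (exp Y).trace := by
        gcongr
        exact Matrix.trace_dexp_mul_le (isHermitian_iff_isSymm.mpr hY) hD
    _ = minner (D * D) (Pmw Y) := by
        simp only [minner, Pmw, mexp, transpose_mul, hD.eq, Matrix.mul_smul, trace_smul,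
          smul_eq_mul, div_eq_inv_mul]
end
end

section
/- Let r ≥ 0 and define f(x) = sinh(x)/(cosh(x) + r). Then for all real δ, ρ with δ ≠ 0, δ + ρ ≠ 0, and δ − ρ ≠ 0, the following inequality holds: f(δ+ρ)/δ + f(δ−ρ)/δ ≤ (1 + |ρ|·tanh(|δ|)/|δ|) · ( f(δ+ρ)/(δ+ρ) + f(δ−ρ)/(δ−ρ) ). -/
open MeasureTheory Matrix

noncomputable section

/-!
Write `f x = sinh x / (cosh x + r)` and `G x = f x / x`, an even nonnegative function. With
`a = δ + ρ`, `b = δ - ρ` and `δ > 0`, the inequality amounts to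
`ρ (G a - G b) ≤ |ρ| tanh δ (G a + G b)`, i.e. for `ρ ≥ 0` to `G a e^{-δ} ≤ G b e^{δ}`.
This follows from the monotonicity of `G x e^{-x} = (1 - e^{-2x}) / (2x) · (cosh x + r)⁻¹` on
`(0, ∞)`, a product of two nonnegative decreasing factors, applied to `|b| ≤ a`.
-/

open Real Set

lemma antitoneOn_one_sub_exp_neg_div : AntitoneOn (fun t => (1 - exp (-t)) / t) (Ioi 0) := by
  intro s hs t ht hst
  have hconv : ConvexOn ℝ univ (fun t => exp (-t)) :=
    convexOn_exp.comp_linearMap (-LinearMap.id)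
  have := hconv.secant_mono (mem_univ 0) (mem_univ s) (mem_univ t) (ne_of_gt hs)
    (ne_of_gt ht) hst
  simp only [neg_zero, exp_zero, sub_zero] at this
  have hneg (u : ℝ) : (1 - exp (-u)) / u = -((exp (-u) - 1) / u) := by ring
  dsimp only
  rw [hneg, hneg]
  exact neg_le_neg this

lemma sinh_mul_exp_neg (x : ℝ) : sinh x * exp (-x) = (1 - exp (-(2 * x))) / 2 := by
  rw [sinh_eq, div_mul_eq_mul_div, sub_mul, ← exp_add, ← exp_add, add_neg_cancel, exp_zero]
  ring_nf

lemma one_sub_tanh (x : ℝ) : 1 - tanh x = exp (-x) / cosh x := by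
  rw [tanh_eq_sinh_div_cosh, ← cosh_sub_sinh, sub_div, div_self (cosh_pos x).ne']

lemma one_add_tanh (x : ℝ) : 1 + tanh x = exp x / cosh x := by
  rw [tanh_eq_sinh_div_cosh, ← cosh_add_sinh, add_div, div_self (cosh_pos x).ne']

section sinhDivCoshAdd

variable {r : ℝ}

def sinhDivCoshAdd (r x : ℝ) : ℝ := sinh x / (cosh x + r)

lemma sinhDivCoshAdd_neg (x : ℝ) : sinhDivCoshAdd r (-x) = -sinhDivCoshAdd r x := by
  simp only [sinhDivCoshAdd, sinh_neg, cosh_neg, neg_div]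

lemma sinhDivCoshAdd_abs_div_abs (x : ℝ) :
    sinhDivCoshAdd r |x| / |x| = sinhDivCoshAdd r x / x := by
  rcases abs_choice x with h | h <;> rw [h]
  rw [sinhDivCoshAdd_neg, neg_div_neg_eq]

lemma cosh_add_pos (hr : -1 < r) (x : ℝ) : 0 < cosh x + r := by
  linarith [one_le_cosh x]

lemma sinhDivCoshAdd_div_self_nonneg (hr : -1 < r) (x : ℝ) : 0 ≤ sinhDivCoshAdd r x / x := by
  rw [← sinhDivCoshAdd_abs_div_abs]
  have := cosh_add_pos hr |x|
  exact div_nonneg (div_nonneg (sinh_nonneg_iff.2 (abs_nonneg x)) this.le) (abs_nonneg x)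

lemma antitoneOn_sinhDivCoshAdd_div_self_mul_exp_neg (hr : -1 < r) :
    AntitoneOn (fun x => sinhDivCoshAdd r x / x * exp (-x)) (Ioi 0) := by
  intro y hy x hx hyx
  have hfactor (t : ℝ) (ht : t ≠ 0) : sinhDivCoshAdd r t / t * exp (-t) =
      (1 - exp (-(2 * t))) / (2 * t) * (cosh t + r)⁻¹ := by
    have := (cosh_add_pos hr t).ne'
    rw [sinhDivCoshAdd, div_div, div_mul_eq_mul_div, sinh_mul_exp_neg]
    field_simp
  rw [mem_Ioi] at hx hy
  simp only [hfactor x hx.ne', hfactor y hy.ne']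
  apply mul_le_mul
  · exact antitoneOn_one_sub_exp_neg_div (mem_Ioi.2 (by positivity))
      (mem_Ioi.2 (by positivity)) (by linarith)
  · exact inv_anti₀ (cosh_add_pos hr y)
      (by gcongr; rwa [cosh_le_cosh, abs_of_pos hy, abs_of_pos hx])
  · exact (inv_pos.2 (cosh_add_pos hr x)).le
  · exact div_nonneg (sub_nonneg.2 (exp_le_one_iff.2 (by linarith))) (by linarith)

lemma sinhDivCoshAdd_div_self_mul_exp_neg_le (hr : -1 < r) {δ ρ : ℝ} (hδ : 0 ≤ δ) (hρ : 0 ≤ ρ)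
    (hb : δ - ρ ≠ 0) :
    sinhDivCoshAdd r (δ + ρ) / (δ + ρ) * exp (-δ) ≤
      sinhDivCoshAdd r (δ - ρ) / (δ - ρ) * exp δ := by
  set c := |δ - ρ|
  have hc : 0 < c := abs_pos.2 hb
  have hca : c ≤ δ + ρ := abs_le.2 ⟨by linarith, by linarith⟩
  have hρc : ρ - c ≤ δ := by linarith [neg_abs_le (δ - ρ)]
  calc sinhDivCoshAdd r (δ + ρ) / (δ + ρ) * exp (-δ)
      = sinhDivCoshAdd r (δ + ρ) / (δ + ρ) * exp (-(δ + ρ)) * exp ρ := by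
        rw [mul_assoc, ← exp_add]; ring_nf
    _ ≤ sinhDivCoshAdd r c / c * exp (-c) * exp ρ :=
        mul_le_mul_of_nonneg_right
          (antitoneOn_sinhDivCoshAdd_div_self_mul_exp_neg hr hc (hc.trans_le hca) hca)
          (exp_pos ρ).le
    _ = sinhDivCoshAdd r c / c * exp (ρ - c) := by
        rw [mul_assoc, ← exp_add]; ring_nf
    _ ≤ sinhDivCoshAdd r c / c * exp δ := by
        gcongr
        exact sinhDivCoshAdd_div_self_nonneg hr c
    _ = sinhDivCoshAdd r (δ - ρ) / (δ - ρ) * exp δ := by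
        rw [sinhDivCoshAdd_abs_div_abs]

lemma sinhDivCoshAdd_div_self_mul_one_sub_tanh_le (hr : -1 < r) {δ ρ : ℝ} (hδ : 0 ≤ δ)
    (hρ : 0 ≤ ρ) (hb : δ - ρ ≠ 0) :
    sinhDivCoshAdd r (δ + ρ) / (δ + ρ) * (1 - tanh δ) ≤
      sinhDivCoshAdd r (δ - ρ) / (δ - ρ) * (1 + tanh δ) := by
  rw [one_sub_tanh, one_add_tanh, ← mul_div_assoc, ← mul_div_assoc]
  exact div_le_div_of_nonneg_right
    (sinhDivCoshAdd_div_self_mul_exp_neg_le hr hδ hρ hb) (cosh_pos δ).le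

lemma mul_sub_sinhDivCoshAdd_div_self_le (hr : -1 < r) {δ ρ : ℝ} (hδ : 0 ≤ δ)
    (ha : δ + ρ ≠ 0) (hb : δ - ρ ≠ 0) :
    ρ * (sinhDivCoshAdd r (δ + ρ) / (δ + ρ) - sinhDivCoshAdd r (δ - ρ) / (δ - ρ)) ≤
      |ρ| * tanh δ *
        (sinhDivCoshAdd r (δ + ρ) / (δ + ρ) + sinhDivCoshAdd r (δ - ρ) / (δ - ρ)) := by
  rcases le_total 0 ρ with hρ | hρ
  · have key := sinhDivCoshAdd_div_self_mul_one_sub_tanh_le hr hδ hρ hb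
    rw [abs_of_nonneg hρ]
    linarith [mul_le_mul_of_nonneg_left key hρ]
  · have key := sinhDivCoshAdd_div_self_mul_one_sub_tanh_le hr hδ (neg_nonneg.2 hρ)
      (by rwa [sub_neg_eq_add])
    rw [sub_neg_eq_add, ← sub_eq_add_neg] at key
    rw [abs_of_nonpos hρ]
    linarith [mul_le_mul_of_nonneg_left key (neg_nonneg.2 hρ)]

lemma sinhDivCoshAdd_div_add_le_of_pos (hr : -1 < r) {δ ρ : ℝ} (hδ : 0 < δ)
    (ha : δ + ρ ≠ 0) (hb : δ - ρ ≠ 0) :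
    sinhDivCoshAdd r (δ + ρ) / δ + sinhDivCoshAdd r (δ - ρ) / δ ≤
      (1 + |ρ| * tanh |δ| / |δ|) *
        (sinhDivCoshAdd r (δ + ρ) / (δ + ρ) + sinhDivCoshAdd r (δ - ρ) / (δ - ρ)) := by
  have key := mul_sub_sinhDivCoshAdd_div_self_le hr hδ.le ha hb
  set A := sinhDivCoshAdd r (δ + ρ) / (δ + ρ)
  set B := sinhDivCoshAdd r (δ - ρ) / (δ - ρ)
  have hA : sinhDivCoshAdd r (δ + ρ) = A * (δ + ρ) := (div_mul_cancel₀ _ ha).symm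
  have hB : sinhDivCoshAdd r (δ - ρ) = B * (δ - ρ) := (div_mul_cancel₀ _ hb).symm
  rw [abs_of_pos hδ]
  calc sinhDivCoshAdd r (δ + ρ) / δ + sinhDivCoshAdd r (δ - ρ) / δ
      = A + B + ρ * (A - B) / δ := by
        rw [hA, hB]; field_simp; ring
    _ ≤ A + B + |ρ| * tanh δ * (A + B) / δ := by gcongr
    _ = (1 + |ρ| * tanh δ / δ) * (A + B) := by field_simp

end sinhDivCoshAdd

/-- The pointwise hyperbolic inequality underlying the
symmetrized entrywise Hessian bound. -/
theorem stmt13 (r : ℝ) (hr : 0 ≤ r) (δ ρ : ℝ) (hδ : δ ≠ 0) (h1 : δ + ρ ≠ 0) (h2 : δ - ρ ≠ 0) :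
    Real.sinh (δ + ρ) / (Real.cosh (δ + ρ) + r) / δ +
      Real.sinh (δ - ρ) / (Real.cosh (δ - ρ) + r) / δ ≤
    (1 + |ρ| * Real.tanh |δ| / |δ|) *
      (Real.sinh (δ + ρ) / (Real.cosh (δ + ρ) + r) / (δ + ρ) +
        Real.sinh (δ - ρ) / (Real.cosh (δ - ρ) + r) / (δ - ρ)) := by
  have hr' : -1 < r := by linarith
  rcases hδ.lt_or_gt with hneg | hpos
  -- `f` is odd, so both sides are invariant under `(δ, ρ) ↦ (-δ, -ρ)`.
  · have h := sinhDivCoshAdd_div_add_le_of_pos hr' (δ := -δ) (ρ := -ρ) (neg_pos.2 hneg)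
      (by rwa [← neg_add, neg_ne_zero]) (by rwa [neg_sub_neg, ← neg_sub, neg_ne_zero])
    rw [← neg_add, neg_sub_neg, ← neg_sub] at h
    simp only [sinhDivCoshAdd_neg, neg_div_neg_eq, abs_neg] at h
    exact h
  · exact sinhDivCoshAdd_div_add_le_of_pos hr' hpos h1 h2
end
end

section
/- Let δ > 0 and r ≥ 0, and define b(x) = sinh(x) / ( x·(cosh(x) + r·cosh(x − δ)) ) for x ≠ 0. Then b is strictly decreasing on the interval (2δ, ∞) and strictly increasing on the interval (−∞, 0). -/
/-!
By `cosh² - sinh² = 1` and the subtraction formula for `cosh`, the derivative of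
`b = hypRatio δ r` has the sign of `(x - sinh x cosh x) + r (x cosh δ - sinh x cosh (x - δ))`.
For `x > 0` the first term is negative because `sinh 2x > 2x`, and the second is nonpositive once
`cosh δ ≤ cosh (x - δ)`, that is once `x ≥ 2δ`, because `x ≤ sinh x`. The negative half-line
reduces to this case through the symmetry `b_δ(-x) = b_{-δ}(x)`, for which the condition
`x ≥ -2δ` is automatic.
-/

open MeasureTheory Matrix

noncomputable section

open Real Set

section HypRatio

variable {δ r x : ℝ}

def hypRatio (δ r x : ℝ) : ℝ :=
  sinh x / (x * (cosh x + r * cosh (x - δ)))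

lemma hypRatio_neg : hypRatio δ r (-x) = hypRatio (-δ) r x := by
  rw [hypRatio, hypRatio, sinh_neg, cosh_neg, show -x - δ = -(x - -δ) by ring, cosh_neg, neg_mul,
    neg_div_neg_eq]

lemma self_lt_sinh_mul_cosh_iff : x < sinh x * cosh x ↔ 0 < x := by
  calc x < sinh x * cosh x ↔ 2 * x < sinh (2 * x) := by
        rw [sinh_two_mul]; constructor <;> intro h <;> linarith
    _ ↔ 0 < 2 * x := self_lt_sinh_iff
    _ ↔ 0 < x := by constructor <;> intro h <;> linarith

lemma mul_cosh_le_sinh_mul_cosh (hx : 0 ≤ x) (h : |δ| ≤ |x - δ|) :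
    x * cosh δ ≤ sinh x * cosh (x - δ) :=
  mul_le_mul (self_le_sinh_iff.mpr hx) (cosh_le_cosh.mpr h) (cosh_pos δ).le (sinh_nonneg_iff.mpr hx)

lemma cosh_add_mul_cosh_pos (hr : 0 ≤ r) : 0 < cosh x + r * cosh (x - δ) :=
  add_pos_of_pos_of_nonneg (cosh_pos x) (mul_nonneg hr (cosh_pos _).le)

lemma hasDerivAt_hypRatio (hr : 0 ≤ r) (hx : x ≠ 0) :
    HasDerivAt (hypRatio δ r)
      ((x - sinh x * cosh x + r * (x * cosh δ - sinh x * cosh (x - δ))) /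
        (x * (cosh x + r * cosh (x - δ))) ^ 2) x := by
  have hcosh : HasDerivAt (fun y => cosh y + r * cosh (y - δ)) (sinh x + r * sinh (x - δ)) x := by
    simpa using (hasDerivAt_cosh x).fun_add (((hasDerivAt_id x).sub_const δ).cosh.const_mul r)
  have hden : HasDerivAt (fun y => y * (cosh y + r * cosh (y - δ)))
      (cosh x + r * cosh (x - δ) + x * (sinh x + r * sinh (x - δ))) x := by
    simpa using (hasDerivAt_id' x).fun_mul hcosh
  refine ((hasDerivAt_sinh x).div hden (mul_ne_zero hx (cosh_add_mul_cosh_pos hr).ne')).congr_deriv ?_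
  have hadd : cosh x * cosh (x - δ) - sinh x * sinh (x - δ) = cosh δ := by
    rw [← cosh_sub, sub_sub_cancel]
  congr 1
  linear_combination x * cosh_sq_sub_sinh_sq x + r * x * hadd

lemma strictAntiOn_hypRatio (hr : 0 ≤ r) : StrictAntiOn (hypRatio δ r) (Ioi (max 0 (2 * δ))) := by
  have hpos : ∀ y ∈ Ioi (max 0 (2 * δ)), 0 < y := fun y hy => (le_max_left _ _).trans_lt hy
  refine strictAntiOn_of_deriv_neg (convex_Ioi _)
    (fun y hy => (hasDerivAt_hypRatio hr (hpos y hy).ne').continuousAt.continuousWithinAt) ?_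
  intro y hy
  rw [interior_Ioi] at hy
  have hy0 := hpos y hy
  have hy2 : 2 * δ < y := (le_max_right _ _).trans_lt hy
  have hδy : |δ| ≤ |y - δ| := abs_le_abs (by linarith) (by linarith)
  rw [(hasDerivAt_hypRatio hr hy0.ne').deriv]
  refine div_neg_of_neg_of_pos ?_ (pow_pos (mul_pos hy0 (cosh_add_mul_cosh_pos hr)) 2)
  have h₁ := self_lt_sinh_mul_cosh_iff.mpr hy0
  have h₂ := mul_nonneg hr (sub_nonneg.mpr (mul_cosh_le_sinh_mul_cosh hy0.le hδy))
  linarith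

lemma strictMonoOn_hypRatio (hr : 0 ≤ r) : StrictMonoOn (hypRatio δ r) (Iio (min 0 (2 * δ))) := by
  have hneg : ∀ y ∈ Iio (min 0 (2 * δ)), -y ∈ Ioi (max 0 (2 * -δ)) := by
    intro y hy
    obtain ⟨hy0, hy2⟩ := lt_min_iff.mp (mem_Iio.mp hy)
    exact mem_Ioi.mpr (max_lt (by linarith) (by linarith))
  intro a ha b hb hab
  simpa only [hypRatio_neg, neg_neg] using
    strictAntiOn_hypRatio hr (hneg b hb) (hneg a ha) (neg_lt_neg hab)

end HypRatio

/-- Piecewise monotonicity of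
`b(x) = sinh x / (x (cosh x + r cosh (x − δ)))`. -/
theorem stmt14 (δ r : ℝ) (hδ : 0 < δ) (hr : 0 ≤ r) :
    StrictAntiOn (fun x : ℝ => Real.sinh x / (x * (Real.cosh x + r * Real.cosh (x - δ))))
        (Set.Ioi (2 * δ)) ∧
      StrictMonoOn (fun x : ℝ => Real.sinh x / (x * (Real.cosh x + r * Real.cosh (x - δ))))
        (Set.Iio 0) := by
  constructor
  · exact (strictAntiOn_hypRatio hr).mono (Ioi_subset_Ioi (max_le (by positivity) le_rfl))
  · exact (strictMonoOn_hypRatio hr).mono (Iio_subset_Iio (le_min le_rfl (by positivity)))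
end
end

section
/- Let z be a real random variable supported on (0,1) with probability density (1/π)·x^{−1/2}·(1−x)^{−1/2} (the Beta(1/2,1/2) distribution). Then for every ℓ ≥ 0: (2/π)·e^{−ℓ/2}/√(1+e^{−ℓ}) ≤ P( log((1−z)/z) ≥ ℓ ) ≤ (2/π)·e^{−ℓ/2}. -/
/-! On `[0, t]` with `t = 1 / (1 + e^ℓ)` the factor `(1 - x)^{-1/2}` lies between `1` and
`(1 - t)^{-1/2}`, so the integral of `x^{-1/2} (1 - x)^{-1/2}` lies between `∫₀ᵗ x^{-1/2} = 2√t`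
and `2√t / √(1 - t)`. For this `t`, `√t = e^{-ℓ/2} / √(1 + e^{-ℓ})` and `√(t / (1 - t)) = e^{-ℓ/2}`. -/

open MeasureTheory Matrix

noncomputable section

open Real Set

section IncompleteBeta

variable {r s t : ℝ}

lemma integral_rpow_from_zero (hr : -1 < r) : ∫ x in (0 : ℝ)..t, x ^ r = t ^ (r + 1) / (r + 1) := by
  rw [integral_rpow (Or.inl hr), zero_rpow (by linarith), sub_zero]

lemma intervalIntegrable_rpow_mul_one_sub_rpow (hr : -1 < r) (ht : t < 1) :
    IntervalIntegrable (fun x => x ^ r * (1 - x) ^ s) volume 0 t := by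
  have hcont : ContinuousOn (fun x : ℝ => (1 - x) ^ s) (uIcc 0 t) := fun x hx =>
    have hx1 : x < 1 := hx.2.trans_lt (max_lt one_pos ht)
    ((continuous_const.sub continuous_id).continuousAt.rpow_const
      (Or.inl (sub_ne_zero.mpr hx1.ne'))).continuousWithinAt
  exact (intervalIntegral.intervalIntegrable_rpow' hr).mul_continuousOn hcont

lemma rpow_add_one_div_le_integral_rpow_mul_one_sub_rpow (hr : -1 < r) (hs : s ≤ 0)
    (ht0 : 0 ≤ t) (ht1 : t < 1) :
    t ^ (r + 1) / (r + 1) ≤ ∫ x in (0 : ℝ)..t, x ^ r * (1 - x) ^ s := by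
  rw [← integral_rpow_from_zero hr]
  refine intervalIntegral.integral_mono_on ht0 (intervalIntegral.intervalIntegrable_rpow' hr)
    (intervalIntegrable_rpow_mul_one_sub_rpow hr ht1) fun x hx => ?_
  have hx1 : 0 < 1 - x := by linarith [hx.2]
  exact le_mul_of_one_le_right (rpow_nonneg hx.1 r)
    (one_le_rpow_of_pos_of_le_one_of_nonpos hx1 (by linarith [hx.1]) hs)

lemma integral_rpow_mul_one_sub_rpow_le (hr : -1 < r) (hs : s ≤ 0) (ht0 : 0 ≤ t) (ht1 : t < 1) :
    ∫ x in (0 : ℝ)..t, x ^ r * (1 - x) ^ s ≤ (1 - t) ^ s * (t ^ (r + 1) / (r + 1)) := by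
  rw [← integral_rpow_from_zero hr, ← intervalIntegral.integral_const_mul]
  refine intervalIntegral.integral_mono_on ht0 (intervalIntegrable_rpow_mul_one_sub_rpow hr ht1)
    ((intervalIntegral.intervalIntegrable_rpow' hr).const_mul _) fun x hx => ?_
  rw [mul_comm]
  exact mul_le_mul_of_nonneg_right (rpow_le_rpow_of_nonpos (by linarith) (by linarith [hx.2]) hs)
    (rpow_nonneg hx.1 r)

end IncompleteBeta

lemma sqrt_one_div_one_add_exp (ℓ : ℝ) :
    √(1 / (1 + exp ℓ)) = exp (-ℓ / 2) / √(1 + exp (-ℓ)) := by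
  rw [neg_div, ← neg_div, exp_half, ← sqrt_div (exp_nonneg _)]
  congr 1
  rw [exp_neg]
  field_simp
  ring

lemma sqrt_one_div_one_add_exp_div (ℓ : ℝ) :
    √(1 / (1 + exp ℓ)) / √(1 - 1 / (1 + exp ℓ)) = exp (-ℓ / 2) := by
  rw [← sqrt_div (by positivity), neg_div, ← neg_div, exp_half]
  congr 1
  rw [exp_neg]
  field_simp
  ring

theorem stmt15_general (ℓ : ℝ) :
    2 / Real.pi * Real.exp (-ℓ / 2) / Real.sqrt (1 + Real.exp (-ℓ)) ≤
      (∫ x in (0 : ℝ)..(1 / (1 + Real.exp ℓ)),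
        1 / Real.pi * x ^ (-(1 : ℝ) / 2) * (1 - x) ^ (-(1 : ℝ) / 2)) ∧
    (∫ x in (0 : ℝ)..(1 / (1 + Real.exp ℓ)),
        1 / Real.pi * x ^ (-(1 : ℝ) / 2) * (1 - x) ^ (-(1 : ℝ) / 2)) ≤
      2 / Real.pi * Real.exp (-ℓ / 2) := by
  set t := 1 / (1 + exp ℓ) with ht
  have ht0 : 0 ≤ t := by positivity
  have ht1 : t < 1 := by rw [ht, div_lt_one (by positivity)]; linarith [exp_pos ℓ]
  have hr : -1 < -(1 : ℝ) / 2 := by norm_num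
  have hs : -(1 : ℝ) / 2 ≤ 0 := by norm_num
  have hprimitive : t ^ (-(1 : ℝ) / 2 + 1) / (-(1 : ℝ) / 2 + 1) = 2 * √t := by
    rw [sqrt_eq_rpow]; norm_num; ring
  have hlower := rpow_add_one_div_le_integral_rpow_mul_one_sub_rpow hr hs ht0 ht1
  have hupper := integral_rpow_mul_one_sub_rpow_le hr hs ht0 ht1
  rw [hprimitive] at hlower hupper
  have hinv : (1 - t) ^ (-(1 : ℝ) / 2) = (√(1 - t))⁻¹ := by
    rw [neg_div, rpow_neg (by linarith), sqrt_eq_rpow]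
  rw [hinv] at hupper
  simp_rw [mul_assoc, intervalIntegral.integral_const_mul]
  constructor
  · calc 2 / π * exp (-ℓ / 2) / √(1 + exp (-ℓ)) = 1 / π * (2 * √t) := by
          rw [ht, sqrt_one_div_one_add_exp]; ring
      _ ≤ _ := by gcongr
  · calc 1 / π * ∫ x in (0 : ℝ)..t, x ^ (-(1 : ℝ) / 2) * (1 - x) ^ (-(1 : ℝ) / 2)
        ≤ 1 / π * ((√(1 - t))⁻¹ * (2 * √t)) := by gcongr
      _ = 2 / π * exp (-ℓ / 2) := by
          rw [ht, ← sqrt_one_div_one_add_exp_div]; ring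

/-- Two-sided tail bound for the logit of a `Beta(1/2,1/2)`
random variable, written via the defining integral
`P(log((1−z)/z) ≥ ℓ) = (1/π) ∫_0^{1/(1+e^ℓ)} x^{-1/2} (1−x)^{-1/2} dx`. -/
theorem stmt15 (ℓ : ℝ) (hℓ : 0 ≤ ℓ) :
    2 / Real.pi * Real.exp (-ℓ / 2) / Real.sqrt (1 + Real.exp (-ℓ)) ≤
      (∫ x in (0 : ℝ)..(1 / (1 + Real.exp ℓ)),
        1 / Real.pi * x ^ (-(1 : ℝ) / 2) * (1 - x) ^ (-(1 : ℝ) / 2)) ∧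
    (∫ x in (0 : ℝ)..(1 / (1 + Real.exp ℓ)),
        1 / Real.pi * x ^ (-(1 : ℝ) / 2) * (1 - x) ^ (-(1 : ℝ) / 2)) ≤
      2 / Real.pi * Real.exp (-ℓ / 2) :=
  stmt15_general ℓ
end
end

section
/- Let z be a real random variable supported on (0,1) with probability density (1/π)·x^{−1/2}·(1−x)^{−1/2} (the Beta(1/2,1/2) distribution). Then for every ℓ ≥ 0, the conditional expectation satisfies E[ log((1−z)/z) | log((1−z)/z) ≥ ℓ ] ≤ ℓ + 2·√(1 + e^{−ℓ}); equivalently, ∫_0^{1/(1+e^{ℓ})} log((1−x)/x)·(1/π)x^{−1/2}(1−x)^{−1/2} dx ≤ (ℓ + 2√(1+e^{−ℓ}))·∫_0^{1/(1+e^{ℓ})} (1/π)x^{−1/2}(1−x)^{−1/2} dx. -/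
/-!
Substituting `x = sin² θ` turns the arcsine law on `(0, 1/(1 + e^ℓ)]` into the uniform measure
`(2/π) dθ` on `(0, t]`, where `tan t = e^{-ℓ/2}`, and the logit `log((1 - x)/x)` into
`-2 log tan θ`. Since `θ ≤ tan θ` and `tan t ≤ t / cos t`,
`-log tan θ ≤ -log tan t + (log t - log θ) + (sec t - 1)`, and `log t - log θ` has mean `1` on
`(0, t]`; so the conditional mean of the logit is at most `ℓ + 2 sec t = ℓ + 2 √(1 + e^{-ℓ})`.
-/

open MeasureTheory Matrix

noncomputable section

open Set Real

lemma rpow_neg_one_half_sq {y : ℝ} (hy : 0 ≤ y) : (y ^ 2) ^ (-(1 : ℝ) / 2) = y⁻¹ := by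
  rw [← rpow_natCast_mul hy]
  norm_num [rpow_neg_one]

lemma integral_mul_arcsine_density_eq {t : ℝ} (ht0 : 0 ≤ t) (ht : t ≤ π / 2) (g : ℝ → ℝ) :
    ∫ x in (0 : ℝ)..sin t ^ 2, g x * (1 / π * x ^ (-(1 : ℝ) / 2) * (1 - x) ^ (-(1 : ℝ) / 2)) =
      2 / π * ∫ θ in (0 : ℝ)..t, g (sin θ ^ 2) := by
  have hderiv_nonneg : ∀ θ ∈ Ioo 0 t, 0 ≤ 2 * sin θ * cos θ := fun θ hθ => by
    have := sin_nonneg_of_nonneg_of_le_pi hθ.1.le (by linarith [hθ.2, pi_pos])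
    have := cos_nonneg_of_mem_Icc (x := θ) ⟨by linarith [hθ.1, pi_pos], by linarith [hθ.2]⟩
    positivity
  have hsubst := integral_Icc_deriv_smul_of_deriv_nonneg (f := fun θ => sin θ ^ 2)
    (g := fun x => g x * (1 / π * x ^ (-(1 : ℝ) / 2) * (1 - x) ^ (-(1 : ℝ) / 2)))
    (by fun_prop) (fun θ _ => by simpa using (hasDerivAt_sin θ).fun_pow 2) hderiv_nonneg ht0
  simp only [sin_zero, ne_eq, OfNat.ofNat_ne_zero, not_false_eq_true, zero_pow] at hsubst
  rw [intervalIntegral.integral_of_le (sq_nonneg _), intervalIntegral.integral_of_le ht0,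
    ← integral_Icc_eq_integral_Ioc, ← integral_Icc_eq_integral_Ioc, ← integral_const_mul,
    ← hsubst, integral_Icc_eq_integral_Ioo, integral_Icc_eq_integral_Ioo]
  refine setIntegral_congr_fun measurableSet_Ioo fun θ hθ => ?_
  have hsin : 0 < sin θ := sin_pos_of_pos_of_lt_pi hθ.1 (by linarith [hθ.2, pi_pos])
  have hcos : 0 < cos θ := cos_pos_of_mem_Ioo ⟨by linarith [hθ.1, pi_pos], by linarith [hθ.2]⟩
  rw [smul_eq_mul, ← cos_sq', rpow_neg_one_half_sq hsin.le, rpow_neg_one_half_sq hcos.le]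
  field_simp

-- Holds for every `θ` through the junk values `x / 0 = 0` and `log 0 = 0`.
lemma log_one_sub_sin_sq_div_sin_sq (θ : ℝ) :
    log ((1 - sin θ ^ 2) / sin θ ^ 2) = 2 * -log (tan θ) := by
  rw [← cos_sq', ← inv_div, ← div_pow, ← tan_eq_sin_div_cos, log_inv, log_pow]
  push_cast
  ring

lemma log_tan_sub_log_tan_le {θ t : ℝ} (hθ : 0 < θ) (hθt : θ ≤ t) (ht : t < π / 2) :
    log (tan t) - log (tan θ) ≤ log t - log θ + ((cos t)⁻¹ - 1) := by
  have ht0 : 0 < t := hθ.trans_le hθt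
  have hcos : 0 < cos t := cos_pos_of_mem_Ioo ⟨by linarith, ht⟩
  have hsin : 0 < sin t := sin_pos_of_pos_of_lt_pi ht0 (by linarith)
  have h_tan_θ : log θ ≤ log (tan θ) := log_le_log hθ (le_tan hθ.le (hθt.trans_lt ht))
  have h_tan_t : log (tan t) ≤ log t - log (cos t) := by
    rw [tan_eq_sin_div_cos, log_div hsin.ne' hcos.ne']
    gcongr
    exact sin_le ht0.le
  have h_sec : -log (cos t) ≤ (cos t)⁻¹ - 1 := by
    rw [← log_inv]
    exact log_le_sub_one_of_pos (inv_pos.2 hcos)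
  linarith

lemma integral_neg_log_tan_le {t : ℝ} (ht0 : 0 ≤ t) (ht : t ≤ π / 4) :
    ∫ θ in (0 : ℝ)..t, -log (tan θ) ≤ ((cos t)⁻¹ - log (tan t)) * t := by
  have ht' : t < π / 2 := by linarith [pi_pos]
  set c := (cos t)⁻¹ - 1 - log (tan t) + log t
  have hbound : ∀ θ ∈ Ioc 0 t, -log (tan θ) ≤ c - log θ := fun θ hθ => by
    linarith [log_tan_sub_log_tan_le hθ.1 hθ.2 ht']
  have hnonneg : ∀ θ ∈ Ioc 0 t, 0 ≤ -log (tan θ) := fun θ hθ => by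
    have htan_pos : 0 < tan θ := tan_pos_of_pos_of_lt_pi_div_two hθ.1 (hθ.2.trans_lt ht')
    have htan_le : tan θ ≤ 1 := by
      rw [← tan_pi_div_four]
      exact strictMonoOn_tan.monotoneOn ⟨by linarith [hθ.1], by linarith [hθ.2]⟩
        ⟨by linarith [pi_pos], by linarith [pi_pos]⟩ (hθ.2.trans ht)
    linarith [log_nonpos htan_pos.le htan_le]
  have hint : IntervalIntegrable (fun θ => c - log θ) volume 0 t :=
    intervalIntegrable_const.sub intervalIntegral.intervalIntegrable_log'
  calc ∫ θ in (0 : ℝ)..t, -log (tan θ) ≤ ∫ θ in (0 : ℝ)..t, (c - log θ) := by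
        rw [intervalIntegral.integral_of_le ht0, intervalIntegral.integral_of_le ht0]
        exact integral_mono_of_nonneg (ae_restrict_of_forall_mem measurableSet_Ioc hnonneg)
          hint.1 (ae_restrict_of_forall_mem measurableSet_Ioc hbound)
    _ = ((cos t)⁻¹ - log (tan t)) * t := by
        rw [intervalIntegral.integral_sub intervalIntegrable_const
          intervalIntegral.intervalIntegrable_log', integral_log]
        simp only [intervalIntegral.integral_const, sub_zero, smul_eq_mul, zero_mul, c]
        ring

/-- Conditional expectation bound for the logit of a
`Beta(1/2,1/2)` random variable, in its equivalent integral form. -/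
theorem stmt16 (ℓ : ℝ) (hℓ : 0 ≤ ℓ) :
    (∫ x in (0 : ℝ)..(1 / (1 + Real.exp ℓ)),
        Real.log ((1 - x) / x) * (1 / Real.pi * x ^ (-(1 : ℝ) / 2) * (1 - x) ^ (-(1 : ℝ) / 2))) ≤
      (ℓ + 2 * Real.sqrt (1 + Real.exp (-ℓ))) *
        ∫ x in (0 : ℝ)..(1 / (1 + Real.exp ℓ)),
          1 / Real.pi * x ^ (-(1 : ℝ) / 2) * (1 - x) ^ (-(1 : ℝ) / 2) := by
  set t := arctan (exp (-ℓ / 2))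
  have hexp : exp (-ℓ / 2) ^ 2 = exp (-ℓ) := by rw [← exp_nat_mul]; ring_nf
  have ht0 : 0 ≤ t := arctan_nonneg.2 (exp_pos _).le
  have ht : t ≤ π / 4 := by
    rw [← arctan_one, arctan_le_arctan_iff, exp_le_one_iff]
    linarith
  have hb : 1 / (1 + exp ℓ) = sin t ^ 2 := by
    rw [sin_arctan, div_pow, sq_sqrt (by positivity), hexp, exp_neg]
    field_simp
    ring
  have htan : -log (tan t) = ℓ / 2 := by rw [tan_arctan, log_exp]; ring
  have hsec : (cos t)⁻¹ = √(1 + exp (-ℓ)) := by rw [cos_arctan, hexp, one_div, inv_inv]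
  have hmass := integral_mul_arcsine_density_eq ht0 (by linarith [pi_pos]) (fun _ => 1)
  simp only [one_mul, intervalIntegral.integral_const, sub_zero, smul_eq_mul, mul_one] at hmass
  rw [hb, hmass, integral_mul_arcsine_density_eq ht0 (by linarith [pi_pos])]
  simp only [log_one_sub_sin_sq_div_sin_sq, intervalIntegral.integral_const_mul]
  have hlog_tan := integral_neg_log_tan_le ht0 ht
  rw [hsec, sub_eq_add_neg, htan] at hlog_tan
  have hπ : 0 ≤ 2 / π := by positivity
  linarith [mul_le_mul_of_nonneg_left hlog_tan hπ]
end
end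

section
/- Let Y be a real symmetric n×n matrix, let u ∈ ℝⁿ be nonzero, let ε ∈ [0,1), and suppose y ∈ ℝⁿ satisfies ‖e^{Y/2}u − y‖₂ ≤ (ε/√8)·‖e^{Y/2}u‖₂. Then y ≠ 0 and ‖P_u(Y) − y yᵀ/‖y‖₂²‖₁ ≤ ε, where ‖·‖₁ denotes the trace (nuclear) norm, i.e., the sum of the absolute values of the eigenvalues. -/
open MeasureTheory Matrix

noncomputable section

/-! With `z = e^{Y/2} u` we have `P_u(Y) = z zᵀ / ‖z‖²`, so the claim compares the orthogonal
projections `P_z`, `P_y` onto the lines through `z` and `y`. Their difference has rank at most 2,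
so its trace norm is at most `√2` times its Frobenius norm, and `‖P_z - P_y‖_F² = 2 sin² θ` for
the angle `θ` between `z` and `y`. Now `‖z‖² ‖y‖² sin² θ` is the Gram determinant of `z, y`, which
equals that of `z - y, y` and is therefore at most `‖z - y‖² ‖y‖²`. Hence
`‖P_z - P_y‖₁² ≤ 4 ‖z - y‖² / ‖z‖² ≤ ε² / 2`. -/

namespace Matrix

variable {m n : Type*} [Fintype n]

theorem rank_add_le {K : Type*} [Field K] (A B : Matrix m n K) :
    (A + B).rank ≤ A.rank + B.rank := by
  rw [rank, rank, rank, mulVecLin_add]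
  refine (Submodule.finrank_mono ?_).trans (Submodule.finrank_add_le_finrank_add_finrank _ _)
  rintro _ ⟨v, rfl⟩
  exact Submodule.mem_sup.2 ⟨A.mulVecLin v, ⟨v, rfl⟩, B.mulVecLin v, ⟨v, rfl⟩, rfl⟩

theorem dotProduct_self_pos {v : n → ℝ} (hv : v ≠ 0) : 0 < v ⬝ᵥ v := by
  simpa using dotProduct_self_star_pos_iff.2 hv

theorem dotProduct_self_mul_sub_sq_le (z y : n → ℝ) :
    (z ⬝ᵥ z) * (y ⬝ᵥ y) - (z ⬝ᵥ y) ^ 2 ≤ ((z - y) ⬝ᵥ (z - y)) * (y ⬝ᵥ y) := by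
  obtain ⟨w, rfl⟩ : ∃ w, z = w + y := ⟨z - y, (sub_add_cancel z y).symm⟩
  simp only [add_sub_cancel_right, add_dotProduct, dotProduct_add, dotProduct_comm y w]
  nlinarith [sq_nonneg (w ⬝ᵥ y)]

end Matrix

theorem sq_sum_abs_le_card_support_mul_sum_sq {ι : Type*} [Fintype ι] [DecidableEq ι]
    (f : ι → ℝ) : (∑ i, |f i|) ^ 2 ≤ (Finset.univ.filter (f · ≠ 0)).card * ∑ i, f i ^ 2 := by
  set s := Finset.univ.filter (f · ≠ 0)
  have hs : ∀ g : ℝ → ℝ, g 0 = 0 → ∑ i ∈ s, g (f i) = ∑ i, g (f i) := fun g hg =>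
    Finset.sum_filter_of_ne fun i _ hi h0 => hi (by rw [h0, hg])
  rw [← hs _ abs_zero, ← hs (· ^ 2) (zero_pow two_ne_zero)]
  simpa only [sq_abs] using sq_sum_le_card_mul_sum_sq (s := s) (f := fun i => |f i|)

namespace Matrix.IsHermitian

variable {n : Type*} [Fintype n] [DecidableEq n] {A : Matrix n n ℝ}

theorem sum_eigenvalues_sq (hA : A.IsHermitian) :
    ∑ i, hA.eigenvalues i ^ 2 = (A * A).trace := by
  set U := (hA.eigenvectorUnitary : Matrix n n ℝ)
  have hU : star U * U = 1 := mem_unitaryGroup_iff'.mp hA.eigenvectorUnitary.2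
  set D := diagonal (RCLike.ofReal ∘ hA.eigenvalues : n → ℝ)
  have hA' : A = U * D * star U := by
    conv_lhs => rw [hA.spectral_theorem, Unitary.conjStarAlgAut_apply]
  calc ∑ i, hA.eigenvalues i ^ 2 = (D * D).trace := by simp [D, sq]
    _ = (U * (D * D) * star U).trace := by rw [trace_mul_cycle, hU, Matrix.one_mul]
    _ = (A * A).trace := by
      rw [hA', show U * D * star U * (U * D * star U) = U * D * (star U * U) * D * star U by
        simp only [Matrix.mul_assoc], hU, Matrix.mul_one, Matrix.mul_assoc U D D]

theorem sq_sum_abs_eigenvalues_le (hA : A.IsHermitian) :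
    (∑ i, |hA.eigenvalues i|) ^ 2 ≤ A.rank * (A * A).trace := by
  rw [hA.rank_eq_card_non_zero_eigs, Fintype.card_subtype, ← hA.sum_eigenvalues_sq]
  exact sq_sum_abs_le_card_support_mul_sum_sq _

end Matrix.IsHermitian

section LineProj

variable {n : Type*} [Fintype n]

def lineProj (v : n → ℝ) : Matrix n n ℝ :=
  (v ⬝ᵥ v)⁻¹ • vecMulVec v v

theorem isHermitian_lineProj (v : n → ℝ) : (lineProj v).IsHermitian := by
  simp [lineProj, IsHermitian]

theorem rank_lineProj_sub_lineProj_le (z y : n → ℝ) : (lineProj z - lineProj y).rank ≤ 2 := by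
  rw [lineProj, lineProj, sub_eq_add_neg, ← neg_smul, ← smul_vecMulVec, ← smul_vecMulVec]
  exact (rank_add_le _ _).trans (add_le_add (rank_vecMulVec_le _ _) (rank_vecMulVec_le _ _))

theorem trace_lineProj_sub_lineProj_sq {z y : n → ℝ} (hz : z ≠ 0) (hy : y ≠ 0) :
    ((lineProj z - lineProj y) * (lineProj z - lineProj y)).trace =
      2 * (1 - (z ⬝ᵥ y) ^ 2 / ((z ⬝ᵥ z) * (y ⬝ᵥ y))) := by
  have hzz := (dotProduct_self_pos hz).ne'
  have hyy := (dotProduct_self_pos hy).ne'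
  simp only [lineProj, sub_mul, mul_sub, smul_mul_smul, vecMulVec_mul_vecMulVec, trace_sub,
    trace_smul, trace_vecMulVec, dotProduct_smul, smul_eq_mul, dotProduct_comm y z]
  field_simp
  ring

theorem trace_lineProj_sub_lineProj_sq_le {z y : n → ℝ} (hz : z ≠ 0) (hy : y ≠ 0) :
    ((lineProj z - lineProj y) * (lineProj z - lineProj y)).trace ≤
      2 * ((z - y) ⬝ᵥ (z - y)) / (z ⬝ᵥ z) := by
  have hzz := dotProduct_self_pos hz
  have hyy := dotProduct_self_pos hy
  rw [trace_lineProj_sub_lineProj_sq hz hy, le_div_iff₀ hzz, one_sub_div (by positivity)]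
  have := dotProduct_self_mul_sub_sq_le z y
  field_simp
  nlinarith

end LineProj

theorem traceNorm_nonneg {n : ℕ} (M : Matrix (Fin n) (Fin n) ℝ) : 0 ≤ traceNorm M :=
  Finset.sum_nonneg fun _ _ => abs_nonneg _

theorem Matrix.IsHermitian.traceNorm_sq_le {n : ℕ} {A : Matrix (Fin n) (Fin n) ℝ}
    (hA : A.IsHermitian) : traceNorm A ^ 2 ≤ A.rank * (A * A).trace := by
  rw [traceNorm, eigs, dif_pos hA]
  exact hA.sq_sum_abs_eigenvalues_le

theorem traceNorm_lineProj_sub_lineProj_sq_le {n : ℕ} {z y : Fin n → ℝ} (hz : z ≠ 0)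
    (hy : y ≠ 0) :
    traceNorm (lineProj z - lineProj y) ^ 2 ≤ 4 * ((z - y) ⬝ᵥ (z - y)) / (z ⬝ᵥ z) := by
  have hP := (isHermitian_lineProj z).sub (isHermitian_lineProj y)
  calc traceNorm (lineProj z - lineProj y) ^ 2
      ≤ 2 * ((lineProj z - lineProj y) * (lineProj z - lineProj y)).trace := by
        refine hP.traceNorm_sq_le.trans (mul_le_mul_of_nonneg_right ?_ ?_)
        · exact_mod_cast rank_lineProj_sub_lineProj_le z y
        · rw [← hP.sum_eigenvalues_sq]; positivity
    _ ≤ 2 * (2 * ((z - y) ⬝ᵥ (z - y)) / (z ⬝ᵥ z)) := by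
        gcongr; exact trace_lineProj_sub_lineProj_sq_le hz hy
    _ = 4 * ((z - y) ⬝ᵥ (z - y)) / (z ⬝ᵥ z) := by ring

theorem enorm2_sq {n : ℕ} (v : Fin n → ℝ) : enorm2 v ^ 2 = v ⬝ᵥ v := by
  rw [enorm2, Real.sq_sqrt (by positivity)]
  simp [dotProduct, sq]

theorem mexp_mulVec_ne_zero {n : ℕ} (A : Matrix (Fin n) (Fin n) ℝ) {u : Fin n → ℝ}
    (hu : u ≠ 0) : mexp A *ᵥ u ≠ 0 := fun h =>
  hu (mulVec_injective_of_isUnit (isUnit_exp A) (h.trans (mulVec_zero _).symm))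

theorem transpose_mexp {n : ℕ} {A : Matrix (Fin n) (Fin n) ℝ} (hA : A.IsSymm) :
    (mexp A)ᵀ = mexp A := by
  rw [mexp, ← exp_transpose, hA]

theorem mexp_half_mul_mexp_half {n : ℕ} (Y : Matrix (Fin n) (Fin n) ℝ) :
    mexp ((2 : ℝ)⁻¹ • Y) * mexp ((2 : ℝ)⁻¹ • Y) = mexp Y := by
  rw [mexp, mexp, ← exp_add_of_commute _ _ (Commute.refl _), ← add_smul]
  norm_num

theorem Pu_eq_lineProj {n : ℕ} (u : Fin n → ℝ) {Y : Matrix (Fin n) (Fin n) ℝ} (hY : Y.IsSymm) :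
    Pu u Y = lineProj (mexp ((2 : ℝ)⁻¹ • Y) *ᵥ u) := by
  set E := mexp ((2 : ℝ)⁻¹ • Y)
  have hE : Eᵀ = E := transpose_mexp (hY.smul _)
  have hnorm : u ⬝ᵥ (mexp Y *ᵥ u) = (E *ᵥ u) ⬝ᵥ (E *ᵥ u) := by
    rw [← mexp_half_mul_mexp_half, ← mulVec_mulVec, dotProduct_mulVec, ← vecMul_transpose, hE]
  have hrank1 : E * vecMulVec u u * E = vecMulVec (E *ᵥ u) (E *ᵥ u) := by
    rw [mul_vecMulVec, vecMulVec_mul, ← mulVec_transpose, hE]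
  rw [Pu, lineProj, hnorm, hrank1]

/-- A multiplicative approximation of `e^{Y/2} u` gives a rank-1
matrix close to `P_u(Y)` in trace norm. -/
theorem stmt18 (n : ℕ) (Y : Matrix (Fin n) (Fin n) ℝ) (hY : Y.IsSymm)
    (u : Fin n → ℝ) (hu : u ≠ 0) (ε : ℝ) (hε0 : 0 ≤ ε) (hε1 : ε < 1)
    (y : Fin n → ℝ)
    (h : enorm2 (mexp ((2 : ℝ)⁻¹ • Y) *ᵥ u - y) ≤
      ε / Real.sqrt 8 * enorm2 (mexp ((2 : ℝ)⁻¹ • Y) *ᵥ u)) :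
    y ≠ 0 ∧ traceNorm (Pu u Y - (enorm2 y ^ 2)⁻¹ • Matrix.vecMulVec y y) ≤ ε := by
  set z := mexp ((2 : ℝ)⁻¹ • Y) *ᵥ u
  have hz : z ≠ 0 := mexp_mulVec_ne_zero _ hu
  have hzz := dotProduct_self_pos hz
  have hdist : (z - y) ⬝ᵥ (z - y) ≤ ε ^ 2 / 8 * (z ⬝ᵥ z) := by
    rw [← enorm2_sq, ← enorm2_sq]
    calc enorm2 (z - y) ^ 2 ≤ (ε / Real.sqrt 8 * enorm2 z) ^ 2 :=
          pow_le_pow_left₀ (Real.sqrt_nonneg _) h 2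
      _ = ε ^ 2 / 8 * enorm2 z ^ 2 := by rw [mul_pow, div_pow, Real.sq_sqrt (by norm_num)]
  have hy : y ≠ 0 := by
    rintro rfl
    rw [sub_zero] at hdist
    nlinarith [mul_lt_mul_of_pos_right (show ε ^ 2 < 8 by nlinarith) hzz]
  refine ⟨hy, ?_⟩
  have hbound : 4 * ((z - y) ⬝ᵥ (z - y)) / (z ⬝ᵥ z) ≤ ε ^ 2 := by
    rw [div_le_iff₀ hzz]
    nlinarith
  rw [Pu_eq_lineProj u hY, enorm2_sq, ← lineProj,
    ← pow_le_pow_iff_left₀ (traceNorm_nonneg _) hε0 two_ne_zero]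
  exact (traceNorm_lineProj_sub_lineProj_sq_le hz hy).trans hbound
end
end
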